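/- arXiv:1505.07536 — 6 statements merged into one kernel-verified Lean document; each statement's English description precedes it below -/
import Mathlib

section
/- A self-adjoint discrete Sturm-Liouville problem (ω, A) with N≥2 has exactly N-2+r eigenvalues counted with multiplicity, where r is the rank of the 2×2 matrix [[-a_{11}+f_0 a_{12}, b_{12}],[-a_{21}+f_0 a_{22}, b_{22}]]. -/
open Polynomial Matrix

/-- The solution of the discrete Sturm–Liouville equation
`-∇(fₙ Δyₙ) + qₙ yₙ = λ wₙ yₙ` (`n ≥ 1`) with initial data `y₀`, `f₀Δy₀ = d₀`,
regarded as a sequence of polynomials in the spectral parameter `λ`. -/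
noncomputable def slSol (f q w : ℕ → ℝ) (y0 d0 : ℂ) : ℕ → Polynomial ℂ
  | 0 => C y0
  | 1 => C (y0 + d0 / (f 0 : ℂ))
  | n + 2 =>
      slSol f q w y0 d0 (n + 1) + C ((f (n + 1) : ℂ))⁻¹ *
        (C ((f n : ℂ)) * (slSol f q w y0 d0 (n + 1) - slSol f q w y0 d0 n)
          + C ((q (n + 1) : ℂ)) * slSol f q w y0 d0 (n + 1)
          - X * C ((w (n + 1) : ℂ)) * slSol f q w y0 d0 (n + 1))

/-- The characteristic polynomial
`Γ(λ) = det A + det B + c₁₁ φ_N(λ) + c₁₂ ψ_N(λ) + c₂₁ f_NΔφ_N(λ) + c₂₂ f_NΔψ_N(λ)`,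
where `φ, ψ` are the fundamental solutions with initial data `(1,0)` and `(0,1)`, and
`C = [[b₁₁,b₂₁],[b₁₂,b₂₂]]·[[a₂₂,-a₂₁],[-a₁₂,a₁₁]]`. Its zeros are the eigenvalues of the
problem, counted with multiplicity. -/
noncomputable def slCharPoly (N : ℕ) (f q w : ℕ → ℝ)
    (A B : Matrix (Fin 2) (Fin 2) ℂ) : Polynomial ℂ :=
  let φ := slSol f q w 1 0
  let ψ := slSol f q w 0 1
  let c11 := B 0 0 * A 1 1 - B 1 0 * A 0 1
  let c12 := -(B 0 0) * A 1 0 + B 1 0 * A 0 0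
  let c21 := B 0 1 * A 1 1 - B 1 1 * A 0 1
  let c22 := -(B 0 1) * A 1 0 + B 1 1 * A 0 0
  C (A.det + B.det) + C c11 * φ N + C c12 * ψ N
    + C (c21 * (f N : ℂ)) * (φ (N + 1) - φ N)
    + C (c22 * (f N : ℂ)) * (ψ (N + 1) - ψ N)

/-- The augmented `2×4` coefficient matrix `(A, B)` of the boundary condition. -/
def slAugment (A B : Matrix (Fin 2) (Fin 2) ℂ) : Matrix (Fin 2) (Fin 4) ℂ :=
  Matrix.of fun i j =>
    if h : (j : ℕ) < 2 then A i ⟨j, h⟩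
    else B i ⟨(j : ℕ) - 2, by have := j.isLt; omega⟩


/-!
Let `φ = slSol f q w 1 0` and `χ = f₀ψ - φ`. By induction on the recurrence, `φ_{k+1}` and
`χ_{k+2}` have degree `k`, with nonzero leading coefficients built from the factors
`-w_j / f_j`. Writing `a_j, b_j` for the columns of `A, B` and `m` for the first column of `M`,
`f₀Γ` is a combination of `φ_N, Δφ_N, χ_N, Δχ_N` whose coefficient of `λ^N` is a nonzero
multiple of `det M`.

If `det M = 0 ≠ M`, write `m = α c`, `b₁ = β c`. The coefficient of `λ^(N-1)` is a nonzero
multiple of `E = w₁ α (b₀ ∧ c) + w_N f₀² β (a₁ ∧ c)`. Self-adjointness makes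
`(ᾱ a₁ - β̄ b₀) c*` Hermitian, so `ᾱ (a₁ ∧ c) = β̄ (b₀ ∧ c)`, and then `ᾱ E` and `β̄ E` are
`w₁|α|² + w_N f₀²|β|² > 0` times `b₀ ∧ c` and `a₁ ∧ c`, which do not both vanish because
`(A|B)` has rank `2`. If `M = 0`, `f₀Γ` is a nonzero multiple of `χ_N`. Over `ℂ` the number
of roots is the degree.
-/

section LinearAlgebra

open ComplexConjugate Submodule

variable {K m n : Type*} [Field K] [Fintype n]

lemma Matrix.rank_le_one_of_col_mem_span_singleton (M : Matrix m n K) (c : m → K)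
    (h : ∀ j, M.col j ∈ K ∙ c) : M.rank ≤ 1 := by
  choose k hk using fun j => mem_span_singleton.1 (h j)
  have : M = Matrix.vecMulVec c k := by
    ext i j
    simpa [Matrix.vecMulVec_apply, mul_comm] using (congrFun (hk j) i).symm
  exact this ▸ Matrix.rank_vecMulVec_le c k

lemma Matrix.rank_pos_of_ne_zero [Fintype m] {M : Matrix m n K} (hM : M ≠ 0) : 0 < M.rank := by
  rw [Matrix.rank_eq_finrank_span_cols, Nat.pos_iff_ne_zero, Ne, Submodule.finrank_eq_zero,
    span_eq_bot]
  contrapose! hM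
  ext i j
  exact congrFun (hM _ ⟨j, rfl⟩) i

def wedge (x y : Fin 2 → ℂ) : ℂ := x 0 * y 1 - x 1 * y 0

lemma wedge_swap (x y : Fin 2 → ℂ) : wedge y x = -wedge x y := by
  unfold wedge; ring

lemma mem_span_singleton_of_wedge_eq_zero {x c : Fin 2 → ℂ} (hc : c ≠ 0) (h : wedge x c = 0) :
    x ∈ ℂ ∙ c := by
  unfold wedge at h
  rw [mem_span_singleton]
  obtain hc0 | hc1 : c 0 ≠ 0 ∨ c 1 ≠ 0 := by simpa [Function.ne_iff, Fin.exists_fin_two] using hc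
  · refine ⟨x 0 / c 0, funext (Fin.forall_fin_two.2 ⟨by simp [hc0], ?_⟩)⟩
    simp only [Pi.smul_apply, smul_eq_mul]
    field_simp
    linear_combination h
  · refine ⟨x 1 / c 1, funext (Fin.forall_fin_two.2 ⟨?_, by simp [hc1]⟩)⟩
    simp only [Pi.smul_apply, smul_eq_mul]
    field_simp
    linear_combination -h

lemma exists_mem_span_singleton_of_wedge_eq_zero {x y : Fin 2 → ℂ} (h : wedge x y = 0) :
    ∃ c, x ∈ ℂ ∙ c ∧ y ∈ ℂ ∙ c := by
  rcases eq_or_ne y 0 with rfl | hy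
  · exact ⟨x, mem_span_singleton_self x, zero_mem _⟩
  · exact ⟨y, mem_span_singleton_of_wedge_eq_zero hy h, mem_span_singleton_self y⟩

lemma wedge_eq_zero_of_hermitian {x c : Fin 2 → ℂ} (hc : c ≠ 0)
    (h : ∀ i j, x i * conj (c j) = c i * conj (x j)) : wedge x c = 0 := by
  unfold wedge
  obtain hc0 | hc1 : c 0 ≠ 0 ∨ c 1 ≠ 0 := by simpa [Function.ne_iff, Fin.exists_fin_two] using hc
  · have : (x 0 * c 1 - x 1 * c 0) * conj (c 0) = 0 := by
      linear_combination c 1 * h 0 0 - c 0 * h 1 0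
    simpa [hc0] using this
  · have : (x 0 * c 1 - x 1 * c 0) * conj (c 1) = 0 := by
      linear_combination c 1 * h 0 1 - c 0 * h 1 1
    simpa [hc1] using this

lemma mul_add_mul_ne_zero_of_conj_mul_eq {r s : ℝ} (hr : 0 < r) (hs : 0 < s) {α β p t : ℂ}
    (hαβ : α ≠ 0 ∨ β ≠ 0) (hpt : p ≠ 0 ∨ t ≠ 0) (h : conj α * t = conj β * p) :
    r * α * p + s * β * t ≠ 0 := by
  intro hE
  have hK : (r * (α * conj α) + s * (β * conj β) : ℂ) ≠ 0 := by
    simp only [Complex.mul_conj]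
    norm_cast
    have := Complex.normSq_nonneg α
    have := Complex.normSq_nonneg β
    rcases hαβ with hα | hβ
    · nlinarith [Complex.normSq_pos.2 hα]
    · nlinarith [Complex.normSq_pos.2 hβ]
  have hp : (r * (α * conj α) + s * (β * conj β)) * p = 0 := by
    linear_combination conj α * hE - s * β * h
  have ht : (r * (α * conj α) + s * (β * conj β)) * t = 0 := by
    linear_combination conj β * hE + r * α * h
  rcases hpt with hp' | ht'
  · exact mul_ne_zero hK hp' hp
  · exact mul_ne_zero hK ht' ht

lemma rank_of_wedge_ne_zero {x y : Fin 2 → ℂ} (h : wedge x y ≠ 0) :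
    (!![x 0, y 0; x 1, y 1]).rank = 2 := by
  refine (Matrix.rank_of_det_ne_zero ?_).trans (Fintype.card_fin 2)
  rw [Matrix.det_fin_two_of]
  convert h using 1
  unfold wedge
  ring

lemma rank_of_wedge_eq_zero {x y : Fin 2 → ℂ} (h : wedge x y = 0) (hxy : ¬(x = 0 ∧ y = 0)) :
    (!![x 0, y 0; x 1, y 1]).rank = 1 := by
  obtain ⟨c, hx, hy⟩ := exists_mem_span_singleton_of_wedge_eq_zero h
  refine le_antisymm (Matrix.rank_le_one_of_col_mem_span_singleton _ c ?_)
    (Matrix.rank_pos_of_ne_zero ?_)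
  · intro j
    fin_cases j
    · convert hx using 1; ext i; fin_cases i <;> rfl
    · convert hy using 1; ext i; fin_cases i <;> rfl
  · intro h0
    have e : ∀ i j, !![x 0, y 0; x 1, y 1] i j = 0 := fun i j => by rw [h0]; rfl
    exact hxy ⟨funext (Fin.forall_fin_two.2 ⟨e 0 0, e 1 0⟩),
      funext (Fin.forall_fin_two.2 ⟨e 0 1, e 1 1⟩)⟩

lemma rank_of_eq_zero {x y : Fin 2 → ℂ} (hx : x = 0) (hy : y = 0) :
    (!![x 0, y 0; x 1, y 1]).rank = 0 := by
  subst hx hy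
  convert Matrix.rank_zero (R := ℂ) (m := Fin 2) (n := Fin 2)
  ext i j
  fin_cases i <;> fin_cases j <;> rfl

lemma mul_J_mul_conjTranspose_apply (A : Matrix (Fin 2) (Fin 2) ℂ) (i j : Fin 2) :
    (A * (!![0, 1; -1, 0] : Matrix (Fin 2) (Fin 2) ℂ) * Aᴴ) i j
      = A i 0 * conj (A j 1) - A i 1 * conj (A j 0) := by
  simp [Matrix.mul_apply, Fin.sum_univ_two]
  ring

lemma rank_slAugment_le_one {A B : Matrix (Fin 2) (Fin 2) ℂ} {c : Fin 2 → ℂ}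
    (hA : ∀ j, A.col j ∈ ℂ ∙ c) (hB : ∀ j, B.col j ∈ ℂ ∙ c) : (slAugment A B).rank ≤ 1 := by
  refine Matrix.rank_le_one_of_col_mem_span_singleton _ c fun j => ?_
  fin_cases j
  exacts [hA 0, hA 1, hB 0, hB 1]

/-- `-slBoundaryCol A f₀` is the coefficient column of `y₀` once `f₀Δy₀` is replaced by
`f₀(y₁ - y₀)` in the boundary condition. -/
def slBoundaryCol (A : Matrix (Fin 2) (Fin 2) ℂ) (f₀ : ℝ) : Fin 2 → ℂ :=
  fun i => -(A i 0) + f₀ * A i 1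

lemma col_zero_eq_smul_sub_slBoundaryCol (A : Matrix (Fin 2) (Fin 2) ℂ) (f₀ : ℝ) :
    A.col 0 = (f₀ : ℂ) • A.col 1 - slBoundaryCol A f₀ := by
  funext i
  simp [slBoundaryCol]

variable {A B : Matrix (Fin 2) (Fin 2) ℂ} {f₀ : ℝ} {c : Fin 2 → ℂ} {α β : ℂ}

lemma conj_mul_wedge_eq_of_selfAdjoint
    (hsa : A * (!![0, 1; -1, 0] : Matrix (Fin 2) (Fin 2) ℂ) * Aᴴ
        = B * (!![0, 1; -1, 0] : Matrix (Fin 2) (Fin 2) ℂ) * Bᴴ)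
    (hc : c ≠ 0) (hm : slBoundaryCol A f₀ = α • c) (hb : B.col 1 = β • c) :
    conj α * wedge (A.col 1) c = conj β * wedge (B.col 0) c := by
  have hA0 : ∀ i, A i 0 = f₀ * A i 1 - α * c i := fun i => by
    simpa [hm] using congrFun (col_zero_eq_smul_sub_slBoundaryCol A f₀) i
  have hB1 : ∀ i, B i 1 = β * c i := fun i => by simpa using congrFun hb i
  have hherm := wedge_eq_zero_of_hermitian (x := conj α • A.col 1 - conj β • B.col 0) hc
    fun i j => by
      have h := congrFun (congrFun hsa i) j
      rw [mul_J_mul_conjTranspose_apply, mul_J_mul_conjTranspose_apply, hA0 i, hA0 j, hB1 i,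
        hB1 j] at h
      simp only [map_sub, map_mul, Complex.conj_ofReal] at h
      simp only [Pi.sub_apply, Pi.smul_apply, smul_eq_mul, Matrix.col_apply, map_sub, map_mul,
        Complex.conj_conj]
      linear_combination h
  simp only [wedge, Pi.sub_apply, Pi.smul_apply, smul_eq_mul] at hherm ⊢
  linear_combination hherm

lemma wedge_ne_zero_or_wedge_ne_zero_of_rank (hrank : (slAugment A B).rank = 2) (hc : c ≠ 0)
    (hm : slBoundaryCol A f₀ = α • c) (hb : B.col 1 = β • c) :
    wedge (B.col 0) c ≠ 0 ∨ wedge (A.col 1) c ≠ 0 := by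
  by_contra! h
  have ha₁ := mem_span_singleton_of_wedge_eq_zero hc h.2
  have hm' : slBoundaryCol A f₀ ∈ ℂ ∙ c := hm ▸ smul_mem _ _ (mem_span_singleton_self c)
  have ha₀ : A.col 0 ∈ ℂ ∙ c :=
    col_zero_eq_smul_sub_slBoundaryCol A f₀ ▸ sub_mem (smul_mem _ _ ha₁) hm'
  have := rank_slAugment_le_one (Fin.forall_fin_two.2 ⟨ha₀, ha₁⟩) (Fin.forall_fin_two.2
    ⟨mem_span_singleton_of_wedge_eq_zero hc h.1, hb ▸ smul_mem _ _ (mem_span_singleton_self c)⟩)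
  omega

lemma slBoundary_mul_wedge_add_ne_zero (hf₀ : f₀ ≠ 0) (hrank : (slAugment A B).rank = 2)
    (hsa : A * (!![0, 1; -1, 0] : Matrix (Fin 2) (Fin 2) ℂ) * Aᴴ
        = B * (!![0, 1; -1, 0] : Matrix (Fin 2) (Fin 2) ℂ) * Bᴴ)
    (hdet : wedge (slBoundaryCol A f₀) (B.col 1) = 0)
    (hM : ¬(slBoundaryCol A f₀ = 0 ∧ B.col 1 = 0)) {r s : ℝ} (hr : 0 < r) (hs : 0 < s) :
    r * wedge (B.col 0) (slBoundaryCol A f₀) + s * f₀ * wedge (A.col 0) (B.col 1) ≠ 0 := by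
  obtain ⟨c, hmc, hbc⟩ := exists_mem_span_singleton_of_wedge_eq_zero hdet
  obtain ⟨α, hα⟩ := mem_span_singleton.1 hmc
  obtain ⟨β, hβ⟩ := mem_span_singleton.1 hbc
  have hc : c ≠ 0 := by
    rintro rfl
    simp only [smul_zero] at hα hβ
    exact hM ⟨hα.symm, hβ.symm⟩
  have hαβ : α ≠ 0 ∨ β ≠ 0 := by
    by_contra! h
    simp only [h.1, h.2, zero_smul] at hα hβ
    exact hM ⟨hα.symm, hβ.symm⟩
  convert mul_add_mul_ne_zero_of_conj_mul_eq hr (by positivity : 0 < s * f₀ ^ 2) hαβ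
    (wedge_ne_zero_or_wedge_ne_zero_of_rank hrank hc hα.symm hβ.symm)
    (conj_mul_wedge_eq_of_selfAdjoint hsa hc hα.symm hβ.symm) using 1
  rw [col_zero_eq_smul_sub_slBoundaryCol A f₀, ← hα, ← hβ]
  simp only [wedge, Pi.sub_apply, Pi.smul_apply, smul_eq_mul]
  push_cast
  ring

lemma slBoundary_det_add_det_eq_zero_and_wedge_ne_zero (hf₀ : f₀ ≠ 0)
    (hrank : (slAugment A B).rank = 2) (hm : slBoundaryCol A f₀ = 0) (hb : B.col 1 = 0) :
    A.det + B.det = 0 ∧ wedge (A.col 0) (B.col 0) ≠ 0 := by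
  have ha₀ : A.col 0 = (f₀ : ℂ) • A.col 1 := by
    rw [col_zero_eq_smul_sub_slBoundaryCol A f₀, hm, sub_zero]
  have hA0 : ∀ i, A i 0 = f₀ * A i 1 := fun i => congrFun ha₀ i
  have hB1 : ∀ i, B i 1 = 0 := fun i => congrFun hb i
  refine ⟨by rw [Matrix.det_fin_two, Matrix.det_fin_two, hA0, hA0, hB1, hB1]; ring, fun h => ?_⟩
  obtain ⟨c, hc₀, hb₀⟩ := exists_mem_span_singleton_of_wedge_eq_zero h
  have ha₁ : A.col 1 = ((f₀ : ℂ))⁻¹ • A.col 0 := by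
    rw [ha₀, smul_smul, inv_mul_cancel₀ (by exact_mod_cast hf₀), one_smul]
  have := rank_slAugment_le_one (Fin.forall_fin_two.2 ⟨hc₀, ha₁ ▸ smul_mem _ _ hc₀⟩)
    (Fin.forall_fin_two.2 ⟨hb₀, hb ▸ zero_mem _⟩)
  omega

end LinearAlgebra

section Recurrence

variable (f q w : ℕ → ℝ)

noncomputable def slStep (n : ℕ) (y₀ y₁ : ℂ[X]) : ℂ[X] :=
  y₁ + C ((f (n + 1) : ℂ))⁻¹ *
    (C ((f n : ℂ)) * (y₁ - y₀) + C ((q (n + 1) : ℂ)) * y₁ - X * C ((w (n + 1) : ℂ)) * y₁)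

def IsSLSolution (y : ℕ → ℂ[X]) : Prop :=
  ∀ n, y (n + 2) = slStep f q w n (y n) (y (n + 1))

lemma isSLSolution_slSol (y₀ d₀ : ℂ) : IsSLSolution f q w (slSol f q w y₀ d₀) := fun _ => rfl

variable {f q w}

lemma IsSLSolution.C_mul {y : ℕ → ℂ[X]} (hy : IsSLSolution f q w y) (a : ℂ) :
    IsSLSolution f q w (fun n => C a * y n) := by
  intro n
  simp only [hy n, slStep]
  ring

lemma IsSLSolution.sub {y z : ℕ → ℂ[X]} (hy : IsSLSolution f q w y)
    (hz : IsSLSolution f q w z) : IsSLSolution f q w (fun n => y n - z n) := by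
  intro n
  simp only [hy n, hz n, slStep]
  ring

lemma coeff_slStep_succ (n i : ℕ) (y₀ y₁ : ℂ[X]) :
    (slStep f q w n y₀ y₁).coeff (i + 1) = y₁.coeff (i + 1) + (f (n + 1) : ℂ)⁻¹ *
      (f n * (y₁.coeff (i + 1) - y₀.coeff (i + 1)) + q (n + 1) * y₁.coeff (i + 1)
        - w (n + 1) * y₁.coeff i) := by
  simp only [slStep, coeff_add, coeff_sub, coeff_C_mul, X_mul_C, mul_assoc, coeff_X_mul]

variable (f w) in
noncomputable def slLead (m k : ℕ) : ℂ :=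
  ∏ j ∈ Finset.range k, (-(w (m + j + 1) : ℂ) / f (m + j + 1))

variable (f w) in
lemma slLead_succ (m k : ℕ) :
    slLead f w m (k + 1) = slLead f w m k * (-(w (m + k + 1) : ℂ) / f (m + k + 1)) :=
  Finset.prod_range_succ _ _

variable (f w) in
lemma slLead_zero_succ (k : ℕ) : slLead f w 0 (k + 1) = -(w 1 : ℂ) / f 1 * slLead f w 1 k := by
  rw [slLead, Finset.prod_range_succ', mul_comm, slLead]
  congr 1
  exact Finset.prod_congr rfl fun j _ => by rw [show 0 + (j + 1) + 1 = 1 + j + 1 by omega]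

lemma slLead_ne_zero {m k : ℕ} (hf : ∀ j, m < j → j ≤ m + k → f j ≠ 0)
    (hw : ∀ j, m < j → j ≤ m + k → w j ≠ 0) : slLead f w m k ≠ 0 :=
  Finset.prod_ne_zero_iff.2 fun j hj => by
    have := Finset.mem_range.1 hj
    exact div_ne_zero (neg_ne_zero.2 (by exact_mod_cast hw _ (by omega) (by omega)))
      (by exact_mod_cast hf _ (by omega) (by omega))

lemma IsSLSolution.natDegree_le_and_coeff {y : ℕ → ℂ[X]} (hy : IsSLSolution f q w y) {m : ℕ}
    {a b : ℂ} (h₀ : y m = C a) (h₁ : y (m + 1) = C b) (k : ℕ) :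
    (y (m + k)).natDegree ≤ k ∧ (y (m + k + 1)).natDegree ≤ k ∧
      (y (m + k + 1)).coeff k = b * slLead f w m k := by
  induction k with
  | zero => simp [h₀, h₁, slLead]
  | succ k ih =>
    obtain ⟨hdeg₀, hdeg₁, hcoeff⟩ := ih
    have hnext : y (m + (k + 1) + 1) = slStep f q w (m + k) (y (m + k)) (y (m + k + 1)) :=
      hy (m + k)
    have hvanish : ∀ i, k < i → (y (m + k)).coeff i = 0 ∧ (y (m + k + 1)).coeff i = 0 :=
      fun i hi => ⟨coeff_eq_zero_of_natDegree_lt (by omega),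
        coeff_eq_zero_of_natDegree_lt (by omega)⟩
    refine ⟨hdeg₁.trans k.le_succ, ?_, ?_⟩
    · rw [hnext, natDegree_le_iff_coeff_eq_zero]
      intro N hN
      obtain ⟨i, rfl⟩ : ∃ i, N = i + 1 := ⟨N - 1, by omega⟩
      rw [coeff_slStep_succ, (hvanish (i + 1) (by omega)).1, (hvanish (i + 1) (by omega)).2,
        (hvanish i (by omega)).2]
      ring
    · rw [hnext, coeff_slStep_succ, (hvanish (k + 1) k.lt_succ_self).1,
        (hvanish (k + 1) k.lt_succ_self).2, hcoeff, slLead_succ]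
      ring

end Recurrence

section Solutions

variable (f q w : ℕ → ℝ)

lemma natDegree_slSol_le_and_coeff (k : ℕ) :
    (slSol f q w 1 0 (k + 1)).natDegree ≤ k ∧
      (slSol f q w 1 0 (k + 1)).coeff k = slLead f w 0 k := by
  have := (isSLSolution_slSol f q w 1 0).natDegree_le_and_coeff (m := 0) (a := 1) (b := 1) rfl
    (by simp [slSol]) k
  simpa using this.2

/-- `χ = f₀ψ - φ` vanishes at `n = 1`, so it has one degree less than `φ`; in the basis `φ, χ`
the leading terms of `f₀Γ` separate. -/
noncomputable def slChi (n : ℕ) : ℂ[X] :=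
  C (f 0 : ℂ) * slSol f q w 0 1 n - slSol f q w 1 0 n

lemma isSLSolution_slChi : IsSLSolution f q w (slChi f q w) :=
  ((isSLSolution_slSol f q w 0 1).C_mul _).sub (isSLSolution_slSol f q w 1 0)

variable {f} in
lemma slChi_one (hf₀ : f 0 ≠ 0) : slChi f q w 1 = C 0 := by
  have : (f 0 : ℂ) ≠ 0 := by exact_mod_cast hf₀
  simp [slChi, slSol, ← C_mul, this]

variable {f} in
lemma slChi_two (hf₀ : f 0 ≠ 0) : slChi f q w 2 = C ((f 0 : ℂ) / f 1) := by
  rw [isSLSolution_slChi f q w 0, slChi_one q w hf₀]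
  simp only [slStep, slChi, slSol, map_zero, map_one, div_eq_mul_inv, C_mul]
  ring

variable {f} in
lemma natDegree_slChi_le_and_coeff (hf₀ : f 0 ≠ 0) (k : ℕ) :
    (slChi f q w (k + 2)).natDegree ≤ k ∧
      (slChi f q w (k + 2)).coeff k = f 0 / f 1 * slLead f w 1 k := by
  have := (isSLSolution_slChi f q w).natDegree_le_and_coeff (slChi_one q w hf₀)
    (slChi_two q w hf₀) k
  rw [show 1 + k + 1 = k + 2 by omega] at this
  exact this.2

end Solutions

lemma natDegree_C_mul_sub_le {R : Type*} [Ring R] (a : R) {p q : R[X]} {d : ℕ}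
    (hp : p.natDegree ≤ d) (hq : q.natDegree ≤ d) : (C a * (p - q)).natDegree ≤ d :=
  (natDegree_C_mul_le _ _).trans ((natDegree_sub_le_of_le hp hq).trans (max_self d).le)

lemma ne_zero_and_card_roots_of_degree_C_mul {a : ℂ} {p : ℂ[X]} {d : ℕ} (ha : a ≠ 0)
    (h : (C a * p).degree = d) : p ≠ 0 ∧ Multiset.card p.roots = d := by
  rw [degree_C_mul ha] at h
  refine ⟨fun hp => by simp [hp] at h, ?_⟩
  rw [IsAlgClosed.card_roots_eq_natDegree, natDegree_eq_of_degree_eq_some h]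

section Pencil

variable (f q w : ℕ → ℝ)

noncomputable def slPencil (N : ℕ) (κ β₀ γ₀ β₁ γ₁ : ℂ) : ℂ[X] :=
  C κ + C β₀ * slSol f q w 1 0 N + C γ₀ * slChi f q w N
    + C (f N * γ₁) * (slChi f q w (N + 1) - slChi f q w N)
    + C (f N * β₁) * (slSol f q w 1 0 (N + 1) - slSol f q w 1 0 N)

lemma C_mul_slCharPoly (N : ℕ) (A B : Matrix (Fin 2) (Fin 2) ℂ) :
    C (f 0 : ℂ) * slCharPoly N f q w A B =
      slPencil f q w N (f 0 * (A.det + B.det)) (wedge (B.col 0) (slBoundaryCol A (f 0)))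
        (wedge (A.col 0) (B.col 0)) (wedge (B.col 1) (slBoundaryCol A (f 0)))
        (wedge (A.col 0) (B.col 1)) := by
  simp only [slCharPoly, slPencil, slChi, wedge, slBoundaryCol, Matrix.col_apply, map_add,
    map_mul, map_sub, map_neg]
  ring

variable {f} (n : ℕ) {κ β₀ γ₀ β₁ γ₁ : ℂ}

lemma slPencil_eq_add :
    slPencil f q w n κ β₀ γ₀ β₁ γ₁ = slPencil f q w n κ β₀ γ₀ 0 γ₁
      + C (f n * β₁) * (slSol f q w 1 0 (n + 1) - slSol f q w 1 0 n) := by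
  simp [slPencil]

variable (hf : ∀ j ≤ n + 2, f j ≠ 0) (hw : ∀ j, 1 ≤ j → j ≤ n + 2 → 0 < w j)
include hf

lemma natDegree_slPencil_le : (slPencil f q w (n + 2) κ β₀ γ₀ 0 γ₁).natDegree ≤ n + 1 := by
  have hf₀ := hf 0 (Nat.zero_le _)
  have hχ₀ := (natDegree_slChi_le_and_coeff q w hf₀ n).1
  simp only [slPencil, mul_zero, map_zero, zero_mul, add_zero]
  refine natDegree_add_le_of_degree_le (natDegree_add_le_of_degree_le
    (natDegree_add_le_of_degree_le (by simp) ?_) ?_) (natDegree_C_mul_sub_le _ ?_ ?_)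
  · exact (natDegree_C_mul_le _ _).trans (natDegree_slSol_le_and_coeff f q w (n + 1)).1
  · exact (natDegree_C_mul_le _ _).trans (hχ₀.trans n.le_succ)
  · exact (natDegree_slChi_le_and_coeff q w hf₀ (n + 1)).1
  · exact hχ₀.trans n.le_succ

include hw

lemma slLead_ne_zero_of_add_le {m k : ℕ} (h : m + k ≤ n + 2) : slLead f w m k ≠ 0 :=
  slLead_ne_zero (fun j _ hj => hf j (by omega)) fun j hj₀ hj => (hw j (by omega) (by omega)).ne'

lemma degree_slPencil_of_ne_zero (hβ₁ : β₁ ≠ 0) :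
    (slPencil f q w (n + 2) κ β₀ γ₀ β₁ γ₁).degree = (n + 2 : ℕ) := by
  have hφ₁ := natDegree_slSol_le_and_coeff f q w (n + 1)
  have hφ₂ := natDegree_slSol_le_and_coeff f q w (n + 2)
  rw [slPencil_eq_add]
  apply degree_eq_of_le_of_coeff_ne_zero
  · rw [← natDegree_le_iff_degree_le]
    exact natDegree_add_le_of_degree_le ((natDegree_slPencil_le q w n hf).trans n.succ.le_succ)
      (natDegree_C_mul_sub_le _ hφ₂.1 (hφ₁.1.trans (n + 1).le_succ))
  · rw [coeff_add, coeff_eq_zero_of_natDegree_lt ((natDegree_slPencil_le q w n hf).trans_lt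
      (n + 1).lt_succ_self), coeff_C_mul, coeff_sub, hφ₂.2,
      coeff_eq_zero_of_natDegree_lt (hφ₁.1.trans_lt (n + 1).lt_succ_self), zero_add, sub_zero]
    exact mul_ne_zero (mul_ne_zero (by exact_mod_cast hf _ le_rfl) hβ₁)
      (slLead_ne_zero_of_add_le w n hf hw (by omega))

lemma degree_slPencil_of_eq_zero (hβ₁ : β₁ = 0)
    (hβ₀γ₁ : (w 1 : ℂ) * β₀ + w (n + 2) * f 0 * γ₁ ≠ 0) :
    (slPencil f q w (n + 2) κ β₀ γ₀ β₁ γ₁).degree = (n + 1 : ℕ) := by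
  subst hβ₁
  have hf₀ := hf 0 (Nat.zero_le _)
  have hf₁ : (f 1 : ℂ) ≠ 0 := by exact_mod_cast hf 1 (by omega)
  have hfN : (f (n + 2) : ℂ) ≠ 0 := by exact_mod_cast hf (n + 2) le_rfl
  have hφ := natDegree_slSol_le_and_coeff f q w (n + 1)
  have hχ₀ := natDegree_slChi_le_and_coeff q w hf₀ n
  have hχ₁ := natDegree_slChi_le_and_coeff q w hf₀ (n + 1)
  apply degree_eq_of_le_of_coeff_ne_zero
    (natDegree_le_iff_degree_le.1 (natDegree_slPencil_le q w n hf))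
  have hlead : (w (n + 2) : ℂ) * slLead f w 0 (n + 1)
      = f (n + 2) * (w 1 / f 1) * slLead f w 1 (n + 1) := by
    have h := slLead_succ f w 0 (n + 1)
    rw [slLead_zero_succ, show 0 + (n + 1) + 1 = n + 2 by omega] at h
    field_simp at h ⊢
    linear_combination h
  have hcoeff : (w 1 : ℂ) * (slPencil f q w (n + 2) κ β₀ γ₀ 0 γ₁).coeff (n + 1)
      = slLead f w 0 (n + 1) * ((w 1 : ℂ) * β₀ + w (n + 2) * f 0 * γ₁) := by
    simp only [slPencil, coeff_add, coeff_sub, coeff_C_mul, coeff_C, mul_zero, map_zero,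
      zero_mul, add_zero]
    rw [hφ.2, hχ₁.2, coeff_eq_zero_of_natDegree_lt (hχ₀.1.trans_lt n.lt_succ_self)]
    simp only [Nat.add_one_ne_zero, if_false, mul_zero, zero_add, sub_zero]
    linear_combination -(f 0 * γ₁) * hlead
  intro h0
  rw [h0, mul_zero] at hcoeff
  exact mul_ne_zero (slLead_ne_zero_of_add_le w n hf hw (by omega)) hβ₀γ₁ hcoeff.symm

lemma degree_slPencil_of_eq_zero_of_eq_zero (hκ : κ = 0) (hβ₀ : β₀ = 0) (hβ₁ : β₁ = 0)
    (hγ₁ : γ₁ = 0) (hγ₀ : γ₀ ≠ 0) : (slPencil f q w (n + 2) κ β₀ γ₀ β₁ γ₁).degree = n := by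
  subst hκ hβ₀ hβ₁ hγ₁
  have hf₀ := hf 0 (Nat.zero_le _)
  have hχ := natDegree_slChi_le_and_coeff q w hf₀ n
  have hred : slPencil f q w (n + 2) 0 0 γ₀ 0 0 = C γ₀ * slChi f q w (n + 2) := by
    simp [slPencil]
  rw [hred, degree_C_mul hγ₀]
  refine degree_eq_of_le_of_coeff_ne_zero (natDegree_le_iff_degree_le.1 hχ.1) ?_
  rw [hχ.2]
  exact mul_ne_zero (div_ne_zero (by exact_mod_cast hf₀) (by exact_mod_cast hf 1 (by omega)))
    (slLead_ne_zero_of_add_le w n hf hw (by omega))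

end Pencil

/-- A self-adjoint discrete Sturm–Liouville problem `(ω, A|B)` with `N ≥ 2` has exactly
`N - 2 + r` eigenvalues counted with multiplicity, where
`r = rank [[-a₁₁ + f₀a₁₂, b₁₂],[-a₂₁ + f₀a₂₂, b₂₂]]`. -/
theorem eigenvalue_count (N : ℕ) (hN : 2 ≤ N) (f q w : ℕ → ℝ)
    (hf : ∀ n ≤ N, f n ≠ 0) (hw : ∀ n, 1 ≤ n → n ≤ N → 0 < w n)
    (A B : Matrix (Fin 2) (Fin 2) ℂ)
    (hrank : (slAugment A B).rank = 2)
    (hsa : A * (!![0, 1; -1, 0] : Matrix (Fin 2) (Fin 2) ℂ) * Aᴴ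
        = B * (!![0, 1; -1, 0] : Matrix (Fin 2) (Fin 2) ℂ) * Bᴴ) :
    slCharPoly N f q w A B ≠ 0 ∧
    Multiset.card (slCharPoly N f q w A B).roots =
      N - 2 + (!![-(A 0 0) + (f 0 : ℂ) * A 0 1, B 0 1;
                  -(A 1 0) + (f 0 : ℂ) * A 1 1, B 1 1] : Matrix (Fin 2) (Fin 2) ℂ).rank := by
  obtain ⟨n, rfl⟩ : ∃ n, N = n + 2 := ⟨N - 2, by omega⟩
  have hf₀ : f 0 ≠ 0 := hf 0 (Nat.zero_le _)
  refine ne_zero_and_card_roots_of_degree_C_mul (a := f 0) (by exact_mod_cast hf₀) ?_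
  rw [C_mul_slCharPoly]
  set m := slBoundaryCol A (f 0)
  change _ = ((n + 2 - 2 + (!![m 0, B.col 1 0; m 1, B.col 1 1]).rank : ℕ) : WithBot ℕ)
  rw [Nat.add_sub_cancel]
  by_cases hdet : wedge m (B.col 1) = 0
  · by_cases hM : m = 0 ∧ B.col 1 = 0
    · obtain ⟨hm, hb⟩ := hM
      obtain ⟨hAB, hγ₀⟩ := slBoundary_det_add_det_eq_zero_and_wedge_ne_zero hf₀ hrank hm hb
      rw [rank_of_eq_zero hm hb, add_zero]
      refine degree_slPencil_of_eq_zero_of_eq_zero q w n hf hw (by rw [hAB, mul_zero])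
        ?_ ?_ ?_ hγ₀ <;> simp only [hm, hb, wedge, Pi.zero_apply, mul_zero, sub_zero]
    · rw [rank_of_wedge_eq_zero hdet hM]
      refine degree_slPencil_of_eq_zero q w n hf hw (by rw [wedge_swap, hdet, neg_zero]) ?_
      have := slBoundary_mul_wedge_add_ne_zero hf₀ hrank hsa hdet hM (hw 1 (le_refl 1) (by omega))
        (hw (n + 2) (by omega) le_rfl)
      exact_mod_cast this
  · rw [rank_of_wedge_ne_zero hdet]
    exact degree_slPencil_of_ne_zero q w n hf hw (by rwa [wedge_swap, neg_ne_zero])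
end

section
/- Let p(λ,t) be a family of real polynomials of degree ≤ k whose coefficients depend continuously on a parameter t∈[t_0-ε,t_0+ε], such that for t≠t_0 the polynomial p(·,t) has exactly k real roots λ_0(t)≤...≤λ_{k-1}(t), and p(·,t_0) has exactly m<k real roots μ_0≤...≤μ_{m-1}. If for each n, λ_n(t) → -∞ as t→t_0^- for 0≤n≤k-m-1, then λ_n(t) → μ_{n-k+m} as t→t_0^- for k-m≤n≤k-1. -/
/-!
Along any ultrafilter `g` converging to `t₀` from the left, each root `λᵢ(t)` converges in the
compact space `EReal` to some `Lᵢ`. Since `p(y,t) / p(x,t) = ∏ᵢ (y - λᵢ(t)) / (x - λᵢ(t))` and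
the factors with `Lᵢ = ±∞` tend to `1`, in the limit `p(·,t₀)` is a constant multiple of
`∏ (X - Lᵢ)` over the finite `Lᵢ`, so these are exactly the roots `μ₀ ≤ … ≤ μ_{m-1}`. The `k - m`
lowest limits are `-∞`, hence by counting the top `m` are finite, and since the `Lᵢ` are ordered
they match the `μⱼ` in order.
-/

open Polynomial Filter Topology Bornology

theorem Set.EqOn.of_monotoneOn_of_map_range_eq {α : Type*} [PartialOrder α] {m : ℕ} {f g : ℕ → α}
    (hf : MonotoneOn f (Set.Iio m)) (hg : MonotoneOn g (Set.Iio m))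
    (h : (Multiset.range m).map f = (Multiset.range m).map g) : Set.EqOn f g (Set.Iio m) := by
  have hsorted : ∀ {f : ℕ → α}, MonotoneOn f (Set.Iio m) →
      ((List.range m).map f).Pairwise (· ≤ ·) := fun hf =>
    List.pairwise_map.2 <| List.pairwise_lt_range.imp_of_mem fun ha hb hab =>
      hf (List.mem_range.1 ha) (List.mem_range.1 hb) hab.le
  have hperm : ((List.range m).map f).Perm ((List.range m).map g) := by
    rwa [← Multiset.coe_eq_coe, ← Multiset.map_coe, ← Multiset.map_coe]
  have heq := hperm.eq_of_pairwise' (hsorted hf) (hsorted hg)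
  intro j hj
  simpa [List.getElem?_range (Set.mem_Iio.1 hj)] using congrArg (·[j]?) heq

theorem tendsto_sub_div_sub_of_tendsto_cobounded {𝕜 ι : Type*} [NormedField 𝕜] {l : Filter ι}
    {r : ι → 𝕜} (hr : Tendsto r l (cobounded 𝕜)) (x y : 𝕜) :
    Tendsto (fun j => (y - r j) / (x - r j)) l (𝓝 1) := by
  have hinv : Tendsto (fun j => (r j)⁻¹) l (𝓝 0) := tendsto_inv₀_cobounded.comp hr
  have hlim := ((hinv.const_mul y).sub_const 1).div ((hinv.const_mul x).sub_const 1)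
    (by simp)
  rw [mul_zero, mul_zero, div_self (by simp)] at hlim
  refine hlim.congr' ?_
  filter_upwards [hr.eventually_ne_cobounded 0] with j hj
  have hscale : ∀ z, z * (r j)⁻¹ - 1 = (z - r j) * (r j)⁻¹ := fun z => by
    rw [sub_mul, mul_inv_cancel₀ hj]
  rw [Pi.div_apply, hscale, hscale, mul_div_mul_right _ _ (inv_ne_zero hj)]

theorem tendsto_prod_sub_div_sub {ι κ : Type*} {l : Filter ι} {s : Finset κ} {r : κ → ι → ℝ}
    {L : κ → EReal} (hL : ∀ i ∈ s, Tendsto (fun j => (r i j : EReal)) l (𝓝 (L i)))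
    {x : ℝ} (hx : ∀ i ∈ s, L i ≠ x) (y : ℝ) :
    Tendsto (fun j => ∏ i ∈ s, (y - r i j) / (x - r i j)) l
      (𝓝 (∏ i ∈ s with L i ≠ ⊥ ∧ L i ≠ ⊤, (y - (L i).toReal) / (x - (L i).toReal))) := by
  rw [Finset.prod_filter]
  refine tendsto_finsetProd s fun i hi => ?_
  split_ifs with hfin
  · have hLi : L i = ((L i).toReal : EReal) := (EReal.coe_toReal hfin.2 hfin.1).symm
    have hri : Tendsto (fun j => r i j) l (𝓝 (L i).toReal) :=
      EReal.tendsto_coe.1 (hLi ▸ hL i hi)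
    refine (tendsto_const_nhds.sub hri).div (tendsto_const_nhds.sub hri) (sub_ne_zero.2 ?_)
    exact fun h => hx i hi (hLi.trans (congrArg _ h.symm))
  · refine tendsto_sub_div_sub_of_tendsto_cobounded ?_ x y
    rcases not_and_or.1 hfin with hbot | htop
    · exact (EReal.tendsto_coe_nhds_bot_iff.1 (not_not.1 hbot ▸ hL i hi)).mono_right
        IsOrderBornology.atBot_le_cobounded
    · exact (EReal.tendsto_coe_nhds_top_iff.1 (not_not.1 htop ▸ hL i hi)).mono_right
        IsOrderBornology.atTop_le_cobounded

theorem Polynomial.eq_C_leadingCoeff_mul_prod_of_roots_eq {R : Type*} [CommRing R] [IsDomain R]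
    {q : R[X]} {k : ℕ} {r : ℕ → R} (hdeg : q.natDegree ≤ k)
    (hroots : q.roots = (Multiset.range k).map r) :
    q = C q.leadingCoeff * ∏ i ∈ Finset.range k, (X - C (r i)) := by
  have hcard : Multiset.card q.roots = k := by simp [hroots]
  conv_lhs => rw [← C_leadingCoeff_mul_prod_multiset_X_sub_C
    (hcard.trans (le_antisymm hdeg (hcard ▸ card_roots' q)).symm)]
  rw [hroots, Multiset.map_map, Finset.prod_eq_multiset_prod, Finset.range_val]
  rfl

theorem Polynomial.continuousAt_eval_of_continuousAt_coeff {R T : Type*} [Semiring R]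
    [TopologicalSpace R] [IsTopologicalSemiring R] [TopologicalSpace T] {p : T → R[X]} {t₀ : T}
    {k : ℕ} (hdeg : ∀ᶠ t in 𝓝 t₀, (p t).natDegree ≤ k)
    (hcoeff : ∀ i, ContinuousAt (fun t => (p t).coeff i) t₀) (y : R) :
    ContinuousAt (fun t => (p t).eval y) t₀ := by
  have hsum : ContinuousAt (fun t => ∑ i ∈ Finset.range (k + 1), (p t).coeff i * y ^ i) t₀ :=
    tendsto_finsetSum _ fun i _ => (hcoeff i).mul continuousAt_const
  refine hsum.congr_of_eventuallyEq ?_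
  filter_upwards [hdeg] with t ht
  exact eval_eq_sum_range' (Nat.lt_succ_of_le ht) y

theorem Polynomial.roots_eq_of_tendsto_eval {ι : Type*} {l : Filter ι} [l.NeBot] {k : ℕ}
    {q : ι → ℝ[X]} {q₀ : ℝ[X]} (hq₀ : q₀ ≠ 0)
    (heval : ∀ y, Tendsto (fun j => (q j).eval y) l (𝓝 (q₀.eval y))) {r : ℕ → ι → ℝ}
    (hdeg : ∀ᶠ j in l, (q j).natDegree ≤ k)
    (hroots : ∀ᶠ j in l, (q j).roots = (Multiset.range k).map fun i => r i j)
    {L : ℕ → EReal} (hL : ∀ i, Tendsto (fun j => (r i j : EReal)) l (𝓝 (L i))) :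
    q₀.roots = {i ∈ Finset.range k | L i ≠ ⊥ ∧ L i ≠ ⊤}.val.map fun i => (L i).toReal := by
  set S := {i ∈ Finset.range k | L i ≠ ⊥ ∧ L i ≠ ⊤}
  set v : ℕ → ℝ := fun i => (L i).toReal
  obtain ⟨x, hx⟩ := Infinite.exists_notMem_finset (q₀.roots.toFinset ∪ (Finset.range k).image v)
  have hq₀x : q₀.eval x ≠ 0 := fun h =>
    hx (Finset.mem_union_left _ (Multiset.mem_toFinset.2 ((mem_roots hq₀).2 h)))
  have hLx : ∀ i ∈ Finset.range k, L i ≠ x := fun i hi h =>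
    hx (Finset.mem_union_right _ (Finset.mem_image.2 ⟨i, hi, by simp [v, h]⟩))
  have hvx : ∏ i ∈ S, (x - v i) ≠ 0 := Finset.prod_ne_zero_iff.2 fun i hi => by
    obtain ⟨hik, hfin⟩ := Finset.mem_filter.1 hi
    refine sub_ne_zero.2 fun h => hLx i hik ?_
    rw [h]
    exact (EReal.coe_toReal hfin.2 hfin.1).symm
  have hratio : ∀ y, q₀.eval y / q₀.eval x = ∏ i ∈ S, (y - v i) / (x - v i) := by
    intro y
    refine tendsto_nhds_unique ((heval y).div (heval x) hq₀x)
      ((tendsto_prod_sub_div_sub (fun i _ => hL i) hLx y).congr' ?_)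
    filter_upwards [hdeg, hroots, (heval x).eventually_ne hq₀x] with j hdj hrj hqx
    have hqj := eq_C_leadingCoeff_mul_prod_of_roots_eq hdj hrj
    have hlc : (q j).leadingCoeff ≠ 0 := fun h => hqx (by rw [hqj, h]; simp)
    rw [Pi.div_apply, hqj]
    simp only [eval_mul, eval_C, eval_prod, eval_sub, eval_X]
    rw [mul_div_mul_left _ _ hlc, Finset.prod_div_distrib]
  have hq₀eq : q₀ = C (q₀.eval x / ∏ i ∈ S, (x - v i)) * ∏ i ∈ S, (X - C (v i)) := by
    refine Polynomial.funext fun y => ?_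
    have := hratio y
    rw [Finset.prod_div_distrib, div_eq_div_iff hq₀x hvx] at this
    simp only [eval_mul, eval_C, eval_prod, eval_sub, eval_X]
    field_simp
    linear_combination this
  rw [hq₀eq, roots_C_mul _ (div_ne_zero hq₀x hvx), Finset.prod_eq_multiset_prod]
  simpa only [Multiset.map_map, Function.comp_def] using roots_multiset_prod_X_sub_C (S.val.map v)

theorem EReal.eq_of_map_toReal_eq_of_eq_bot {k m : ℕ} {L : ℕ → EReal} {μ : ℕ → ℝ}
    (hL : MonotoneOn L (Set.Iio k)) (hμ : MonotoneOn μ (Set.Iio m))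
    (hbot : ∀ i < k - m, L i = ⊥)
    (h : ({i ∈ Finset.range k | L i ≠ ⊥ ∧ L i ≠ ⊤}.val.map fun i => (L i).toReal) =
      (Multiset.range m).map μ) :
    ∀ n, k - m ≤ n → n < k → L n = μ (n - (k - m)) := by
  set S := {i ∈ Finset.range k | L i ≠ ⊥ ∧ L i ≠ ⊤}
  have hcard : S.card = m := by simpa using congrArg Multiset.card h
  have hmk : m ≤ k := hcard ▸ (Finset.card_filter_le _ _).trans (Finset.card_range k).le
  have hS : S = Finset.Ico (k - m) k := by
    refine Finset.eq_of_subset_of_card_le (fun i hi => ?_)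
      (by simp only [Nat.card_Ico, hcard]; omega)
    obtain ⟨hik, hfin, -⟩ := Finset.mem_filter.1 hi
    exact Finset.mem_Ico.2 ⟨not_lt.1 fun h => hfin (hbot i h), Finset.mem_range.1 hik⟩
  have hfin : ∀ i, k - m ≤ i → i < k → L i ≠ ⊥ ∧ L i ≠ ⊤ := fun i h1 h2 =>
    (Finset.mem_filter.1 (hS ▸ Finset.mem_Ico.2 ⟨h1, h2⟩ : i ∈ S)).2
  have hval : S.val = (Multiset.range m).map (k - m + ·) := by
    have hIco := Finset.map_add_left_Ico 0 m (k - m)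
    rw [add_zero, Nat.sub_add_cancel hmk, ← Finset.range_eq_Ico] at hIco
    rw [hS, ← hIco, Finset.map_val, Finset.range_val]
    rfl
  have hmono : MonotoneOn (fun j => (L (k - m + j)).toReal) (Set.Iio m) := by
    intro i hi j hj hij
    rw [Set.mem_Iio] at hi hj
    exact EReal.toReal_le_toReal (hL (Set.mem_Iio.2 (by omega)) (Set.mem_Iio.2 (by omega))
      (by omega)) (hfin _ (by omega) (by omega)).1 (hfin _ (by omega) (by omega)).2
  have heq := Set.EqOn.of_monotoneOn_of_map_range_eq hmono hμ
    (by rw [← h, hval, Multiset.map_map]; rfl)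
  intro n hn hnk
  have hμn : (L n).toReal = μ (n - (k - m)) := by
    simpa only [Nat.add_sub_cancel' hn] using heq (show n - (k - m) < m by omega)
  rw [← EReal.coe_toReal (hfin n hn hnk).2 (hfin n hn hnk).1, hμn]

theorem escaping_roots_limit_general (k m : ℕ) (t0 ε : ℝ) (hε : 0 < ε)
    (p : ℝ → Polynomial ℝ)
    (hdeg : ∀ t ∈ Set.Icc (t0 - ε) (t0 + ε), (p t).natDegree ≤ k)
    (hcont : ∀ i : ℕ, ContinuousOn (fun t => (p t).coeff i) (Set.Icc (t0 - ε) (t0 + ε)))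
    (lam : ℕ → ℝ → ℝ) (μ : ℕ → ℝ)
    (hroots : ∀ t ∈ Set.Icc (t0 - ε) (t0 + ε), t ≠ t0 →
      (p t).roots = Multiset.map (fun n => lam n t) (Multiset.range k))
    (hsorted : ∀ t ∈ Set.Icc (t0 - ε) (t0 + ε), t ≠ t0 →
      ∀ i j : ℕ, i ≤ j → j < k → lam i t ≤ lam j t)
    (hroots0 : (p t0).roots = Multiset.map μ (Multiset.range m))
    (hsorted0 : ∀ i j : ℕ, i ≤ j → j < m → μ i ≤ μ j)
    (hbot : ∀ n < k - m,
      Tendsto (lam n) (nhdsWithin t0 (Set.Iio t0)) atBot) :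
    ∀ n, k - m ≤ n → n < k →
      Tendsto (lam n) (nhdsWithin t0 (Set.Iio t0)) (nhds (μ (n - (k - m)))) := by
  intro n hn hnk
  have hp0 : p t0 ≠ 0 := fun h => by
    have hm : m = 0 := by simpa [h] using (congrArg Multiset.card hroots0).symm
    omega
  have hIcc : Set.Icc (t0 - ε) (t0 + ε) ∈ 𝓝 t0 := Icc_mem_nhds (by linarith) (by linarith)
  rw [tendsto_iff_ultrafilter]
  intro g hg
  have hnear : ∀ᶠ t in (g : Filter ℝ), t ∈ Set.Icc (t0 - ε) (t0 + ε) ∧ t ≠ t0 :=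
    hg <| mem_of_superset (inter_mem_nhdsWithin _ hIcc) fun t ht => ⟨ht.2, ne_of_lt ht.1⟩
  have hconv i : ∃ L : EReal, Tendsto (fun t => (lam i t : EReal)) g (𝓝 L) :=
    ⟨_, (g.map fun t => (lam i t : EReal)).le_nhds_lim⟩
  choose L hL using hconv
  have heval y : Tendsto (fun t => (p t).eval y) g (𝓝 ((p t0).eval y)) :=
    (continuousAt_eval_of_continuousAt_coeff (Filter.eventually_of_mem hIcc hdeg)
      (fun i => (hcont i).continuousAt hIcc) y).tendsto.mono_left (hg.trans nhdsWithin_le_nhds)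
  have hlimroots := roots_eq_of_tendsto_eval hp0 heval (hnear.mono fun t ht => hdeg t ht.1)
    (hnear.mono fun t ht => hroots t ht.1 ht.2) hL
  have hLmono : MonotoneOn L (Set.Iio k) := fun i _ j hj hij =>
    le_of_tendsto_of_tendsto (hL i) (hL j) <| hnear.mono fun t ht =>
      EReal.coe_le_coe_iff.2 (hsorted t ht.1 ht.2 i j hij hj)
  have hLbot i (hi : i < k - m) : L i = ⊥ :=
    tendsto_nhds_unique (hL i) (EReal.tendsto_coe_nhds_bot_iff.2 ((hbot i hi).mono_left hg))
  have hLn := EReal.eq_of_map_toReal_eq_of_eq_bot hLmono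
    (fun i _ j hj hij => hsorted0 i j hij hj) hLbot (hroots0 ▸ hlimroots).symm n hn hnk
  exact EReal.tendsto_coe.1 (hLn ▸ hL n)

/-- Polynomial-root formulation of Theorem 2.2(i): let `p(·,t)` be a family of real
polynomials of degree `≤ k` with coefficients continuous in `t ∈ [t₀-ε, t₀+ε]`, having
exactly `k` real roots (with multiplicity) `λ₀(t) ≤ … ≤ λ_{k-1}(t)` for `t ≠ t₀`, and
exactly `m < k` real roots `μ₀ ≤ … ≤ μ_{m-1}` at `t = t₀`.  If `λₙ(t) → -∞` as
`t → t₀⁻` for `0 ≤ n ≤ k-m-1`, then `λₙ(t) → μ_{n-(k-m)}` as `t → t₀⁻` for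
`k-m ≤ n ≤ k-1`. -/
theorem escaping_roots_limit (k m : ℕ) (hm : m < k) (t0 ε : ℝ) (hε : 0 < ε)
    (p : ℝ → Polynomial ℝ)
    (hdeg : ∀ t ∈ Set.Icc (t0 - ε) (t0 + ε), (p t).natDegree ≤ k)
    (hcont : ∀ i : ℕ, ContinuousOn (fun t => (p t).coeff i) (Set.Icc (t0 - ε) (t0 + ε)))
    (lam : ℕ → ℝ → ℝ) (μ : ℕ → ℝ)
    (hroots : ∀ t ∈ Set.Icc (t0 - ε) (t0 + ε), t ≠ t0 →
      (p t).roots = Multiset.map (fun n => lam n t) (Multiset.range k))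
    (hsorted : ∀ t ∈ Set.Icc (t0 - ε) (t0 + ε), t ≠ t0 →
      ∀ i j : ℕ, i ≤ j → j < k → lam i t ≤ lam j t)
    (hroots0 : (p t0).roots = Multiset.map μ (Multiset.range m))
    (hsorted0 : ∀ i j : ℕ, i ≤ j → j < m → μ i ≤ μ j)
    (hbot : ∀ n < k - m,
      Tendsto (lam n) (nhdsWithin t0 (Set.Iio t0)) atBot) :
    ∀ n, k - m ≤ n → n < k →
      Tendsto (lam n) (nhdsWithin t0 (Set.Iio t0)) (nhds (μ (n - (k - m)))) :=
  escaping_roots_limit_general k m t0 ε hε p hdeg hcont lam μ hroots hsorted hroots0 hsorted0 hbot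
end

section
/- Fix a self-adjoint boundary condition with coefficient matrices A, B and set μ_1 = a_{11}b_{22} - a_{21}b_{12}, μ_2 = a_{22}b_{12} - a_{12}b_{22}. If μ_1≠0 and μ_2≠0, then for every discrete Sturm-Liouville equation ω=(1/f,q,w), the problem (ω,A|B) has exactly N-1 eigenvalues when 1/f_0 = -μ_2/μ_1 and exactly N eigenvalues when 1/f_0 ≠ -μ_2/μ_1. -/
open Polynomial Matrix

/-! The solutions `φ` (`y₀ = 1`, `f₀Δy₀ = 0`) and `ψ` (`y₀ = 0`, `f₀Δy₀ = 1`) are polynomials in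
`λ` with `deg yₙ₊₁ ≤ n` and leading coefficient `y₁ ∏ₖ₌₁ⁿ (-wₖ/fₖ)`. Hence `deg Γ ≤ N`, and the
`λᴺ`-coefficient of `Γ` is `f_N ∏ₖ₌₁ᴺ (-wₖ/fₖ) (μ₂ + μ₁/f₀)`, which vanishes exactly when
`1/f₀ = -μ₂/μ₁`. In that case the `λᴺ⁻¹`-coefficient only involves `χ = φ - f₀ψ`; since `χ₁ = 0`,
`χ` solves the equation shifted by one step, which gives its leading coefficient. The
self-adjointness `AJA* = BJB*` then turns this coefficient, multiplied by `w₁ conj μ₁`, into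
`∏ₖ₌₁ᴺ⁻¹ (-wₖ/fₖ) (w₁ |det B|² + w_N |μ₁|²)`, which is nonzero as `w > 0` and `μ₁ ≠ 0`.
Over `ℂ` the number of roots is the degree. -/

namespace Polynomial

variable {R : Type*} [CommRing R]

theorem natDegree_recurrenceStep_le {p r : R[X]} {n : ℕ} (hp : p.natDegree ≤ n)
    (hr : r.natDegree ≤ n) (a b c : R) : (C a * p + C b * r + C c * X * p).natDegree ≤ n + 1 := by
  rw [natDegree_le_iff_coeff_eq_zero]
  intro k hk
  obtain ⟨j, rfl⟩ : ∃ j, k = j + 1 := ⟨k - 1, by omega⟩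
  simp only [coeff_add, coeff_C_mul, mul_assoc, coeff_X_mul,
    coeff_eq_zero_of_natDegree_lt (show p.natDegree < j + 1 by omega),
    coeff_eq_zero_of_natDegree_lt (show r.natDegree < j + 1 by omega),
    coeff_eq_zero_of_natDegree_lt (show p.natDegree < j by omega), mul_zero, add_zero]

theorem coeff_recurrenceStep {p r : R[X]} {n : ℕ} (hp : p.natDegree ≤ n) (hr : r.natDegree ≤ n)
    (a b c : R) : (C a * p + C b * r + C c * X * p).coeff (n + 1) = c * p.coeff n := by
  simp only [coeff_add, coeff_C_mul, mul_assoc, coeff_X_mul,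
    coeff_eq_zero_of_natDegree_lt (show p.natDegree < n + 1 by omega),
    coeff_eq_zero_of_natDegree_lt (show r.natDegree < n + 1 by omega), mul_zero, zero_add]

theorem ne_zero_and_card_roots_eq {k : Type*} [Field k] [IsAlgClosed k] {p : k[X]}
    {n : ℕ} (hp : p.natDegree ≤ n) (hc : p.coeff n ≠ 0) :
    p ≠ 0 ∧ Multiset.card p.roots = n :=
  ⟨fun h ↦ hc (by simp [h]), by
    rw [IsAlgClosed.card_roots_eq_natDegree, natDegree_eq_of_le_of_coeff_ne_zero hp hc]⟩

end Polynomial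

noncomputable def slLeadCoeff (f w : ℕ → ℝ) (n : ℕ) : ℂ :=
  ∏ k ∈ Finset.range n, (-(w (k + 1) : ℂ) / (f (k + 1) : ℂ))

theorem slLeadCoeff_succ (f w : ℕ → ℝ) (n : ℕ) :
    slLeadCoeff f w (n + 1) = slLeadCoeff f w n * (-(w (n + 1) : ℂ) / f (n + 1)) :=
  Finset.prod_range_succ _ n

theorem slLeadCoeff_succ' (f w : ℕ → ℝ) (n : ℕ) :
    slLeadCoeff f w (n + 1)
      = slLeadCoeff (fun k ↦ f (k + 1)) (fun k ↦ w (k + 1)) n * (-(w 1 : ℂ) / f 1) :=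
  Finset.prod_range_succ' _ n

theorem slLeadCoeff_ne_zero {f w : ℕ → ℝ} {n : ℕ}
    (hf : ∀ k, 1 ≤ k → k ≤ n → f k ≠ 0) (hw : ∀ k, 1 ≤ k → k ≤ n → w k ≠ 0) : slLeadCoeff f w n ≠ 0 :=
  Finset.prod_ne_zero_iff.mpr fun k hk ↦ by
    have hk := Finset.mem_range.mp hk
    exact div_ne_zero (neg_ne_zero.mpr (by exact_mod_cast hw (k + 1) (by omega) (by omega)))
      (by exact_mod_cast hf (k + 1) (by omega) (by omega))

section slSol

variable (f q w : ℕ → ℝ)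

theorem slSol_add_two (y0 d0 : ℂ) (n : ℕ) :
    slSol f q w y0 d0 (n + 2)
      = C (1 + (f n + q (n + 1) : ℂ) / f (n + 1)) * slSol f q w y0 d0 (n + 1)
        + C (-(f n : ℂ) / f (n + 1)) * slSol f q w y0 d0 n
        + C (-(w (n + 1) : ℂ) / f (n + 1)) * X * slSol f q w y0 d0 (n + 1) := by
  rw [slSol]
  simp only [div_eq_inv_mul, map_add, map_mul, map_neg, map_one]
  ring

theorem slSol_natDegree_le_and_coeff (y0 d0 : ℂ) (m : ℕ) :
    (slSol f q w y0 d0 (m + 1)).natDegree ≤ m ∧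
      (slSol f q w y0 d0 (m + 1)).coeff m = (y0 + d0 / f 0) * slLeadCoeff f w m := by
  suffices h : (slSol f q w y0 d0 m).natDegree ≤ m ∧
      (slSol f q w y0 d0 (m + 1)).natDegree ≤ m ∧
      (slSol f q w y0 d0 (m + 1)).coeff m = (y0 + d0 / f 0) * slLeadCoeff f w m from h.2
  induction m with
  | zero => simp [slSol, slLeadCoeff]
  | succ m ih =>
    obtain ⟨hm, hm1, hc⟩ := ih
    refine ⟨hm1.trans m.le_succ, ?_, ?_⟩
    · rw [slSol_add_two]; exact natDegree_recurrenceStep_le hm1 hm _ _ _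
    · rw [slSol_add_two, coeff_recurrenceStep hm1 hm, hc]
      simp only [slLeadCoeff, Finset.prod_range_succ]
      ring

theorem slSol_natDegree_le (y0 d0 : ℂ) (n : ℕ) : (slSol f q w y0 d0 n).natDegree ≤ n := by
  cases n with
  | zero => simp [slSol]
  | succ m => exact (slSol_natDegree_le_and_coeff f q w y0 d0 m).1.trans m.le_succ

theorem slSol_linear (a b y0 d0 y0' d0' : ℂ) (n : ℕ) :
    slSol f q w (a * y0 + b * y0') (a * d0 + b * d0') n
      = C a * slSol f q w y0 d0 n + C b * slSol f q w y0' d0' n := by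
  induction n using Nat.twoStepInduction with
  | zero => simp only [slSol, ← map_mul, ← map_add]
  | one =>
    simp only [slSol, ← map_mul, ← map_add]
    congr 1
    ring
  | more n ih ih' =>
    rw [slSol_add_two, slSol_add_two, slSol_add_two, ih, ih']
    ring

theorem slSol_succ_eq_shift {y0 d0 y1 d1 : ℂ} (h1 : slSol f q w y0 d0 1 = C y1)
    (h2 : slSol f q w y0 d0 2 = C (y1 + d1 / f 1)) (n : ℕ) :
    slSol f q w y0 d0 (n + 1)
      = slSol (fun k ↦ f (k + 1)) (fun k ↦ q (k + 1)) (fun k ↦ w (k + 1)) y1 d1 n := by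
  induction n using Nat.twoStepInduction with
  | zero => exact h1
  | one => exact h2
  | more n ih ih' =>
    rw [slSol_add_two f q w _ _ (n + 1), ih', ih, slSol_add_two _ _ _ _ _ n]

theorem slSol_coeff_sub_mul_coeff (hf0 : (f 0 : ℂ) ≠ 0) (m : ℕ) :
    (slSol f q w 1 0 (m + 2)).coeff m - f 0 * (slSol f q w 0 1 (m + 2)).coeff m
      = -(f 0 : ℂ) / f 1 * slLeadCoeff (fun k ↦ f (k + 1)) (fun k ↦ w (k + 1)) m := by
  have hχ (n : ℕ) :
      slSol f q w 1 (-f 0) n = slSol f q w 1 0 n - C (f 0 : ℂ) * slSol f q w 0 1 n := by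
    simpa [sub_eq_add_neg] using slSol_linear f q w 1 (-f 0) 1 0 0 1 n
  have h1 : slSol f q w 1 (-f 0) 1 = C 0 := by simp [slSol, hf0]
  have h2 : slSol f q w 1 (-f 0) 2 = C (0 + -(f 0 : ℂ) / f 1) := by
    rw [slSol_add_two, h1]
    simp [slSol]
  have hlead := (slSol_natDegree_le_and_coeff (fun k ↦ f (k + 1)) (fun k ↦ q (k + 1))
    (fun k ↦ w (k + 1)) 0 (-f 0) m).2
  rw [← slSol_succ_eq_shift f q w h1 h2 (m + 1), hχ] at hlead
  simpa [coeff_sub, coeff_C_mul] using hlead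

end slSol

open ComplexConjugate in
theorem normSq_det_of_selfAdjoint {A B : Matrix (Fin 2) (Fin 2) ℂ}
    (hsa : A * (!![0, 1; -1, 0] : Matrix (Fin 2) (Fin 2) ℂ) * Aᴴ
        = B * (!![0, 1; -1, 0] : Matrix (Fin 2) (Fin 2) ℂ) * Bᴴ) :
    (B 0 0 * A 1 1 - B 1 0 * A 0 1) * conj (A 0 0 * B 1 1 - A 1 0 * B 0 1)
      - (-(B 0 0) * A 1 0 + B 1 0 * A 0 0) * conj (A 1 1 * B 0 1 - A 0 1 * B 1 1)
      = Complex.normSq B.det := by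
  have h00 := congrFun (congrFun hsa 0) 0
  have h11 := congrFun (congrFun hsa 1) 1
  have h01 := congrFun (congrFun hsa 0) 1
  have h10 := congrFun (congrFun hsa 1) 0
  simp only [Matrix.mul_apply, Fin.sum_univ_two, Matrix.conjTranspose_apply, Matrix.of_apply,
    Matrix.cons_val', Matrix.cons_val_zero, Matrix.cons_val_one, Matrix.empty_val',
    Matrix.cons_val_fin_one, Complex.star_def] at h00 h11 h01 h10
  rw [← Complex.mul_conj, Matrix.det_fin_two]
  simp only [map_sub, map_mul]
  linear_combination -(conj (B 1 1) * B 0 0) * h10 + (conj (B 1 1) * B 1 0) * h00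
    - (conj (B 0 1) * B 1 0) * h01 + (conj (B 0 1) * B 0 0) * h11

section slCharPoly

variable (f q w : ℕ → ℝ) (A B : Matrix (Fin 2) (Fin 2) ℂ)

theorem slCharPoly_natDegree_le (N : ℕ) : (slCharPoly N f q w A B).natDegree ≤ N := by
  rw [natDegree_le_iff_coeff_eq_zero]
  intro k hk
  have hN (y0 d0 : ℂ) : (slSol f q w y0 d0 N).coeff k = 0 :=
    coeff_eq_zero_of_natDegree_lt ((slSol_natDegree_le f q w y0 d0 N).trans_lt hk)
  have hN1 (y0 d0 : ℂ) : (slSol f q w y0 d0 (N + 1)).coeff k = 0 :=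
    coeff_eq_zero_of_natDegree_lt ((slSol_natDegree_le_and_coeff f q w y0 d0 N).1.trans_lt hk)
  simp only [slCharPoly, coeff_add, coeff_sub, coeff_C_mul, coeff_C, hN, hN1,
    if_neg (show k ≠ 0 by omega), sub_self, mul_zero, add_zero]

theorem slCharPoly_coeff_top (M : ℕ) :
    (slCharPoly (M + 1) f q w A B).coeff (M + 1)
      = f (M + 1) * slLeadCoeff f w (M + 1)
        * ((A 1 1 * B 0 1 - A 0 1 * B 1 1)
          + (A 0 0 * B 1 1 - A 1 0 * B 0 1) * (f 0 : ℂ)⁻¹) := by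
  have hN (y0 d0 : ℂ) : (slSol f q w y0 d0 (M + 1)).coeff (M + 1) = 0 :=
    coeff_eq_zero_of_natDegree_lt
      ((slSol_natDegree_le_and_coeff f q w y0 d0 M).1.trans_lt M.lt_succ_self)
  simp only [slCharPoly, coeff_add, coeff_sub, coeff_C_mul, coeff_C, hN,
    (slSol_natDegree_le_and_coeff f q w _ _ (M + 1)).2, if_neg M.succ_ne_zero]
  ring

theorem slCharPoly_coeff_pred (hf0 : (f 0 : ℂ) ≠ 0)
    (hμ : A 0 0 * B 1 1 - A 1 0 * B 0 1 = -f 0 * (A 1 1 * B 0 1 - A 0 1 * B 1 1)) (M : ℕ) :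
    (slCharPoly (M + 2) f q w A B).coeff (M + 1)
      = ((B 0 0 * A 1 1 - B 1 0 * A 0 1) + (-(B 0 0) * A 1 0 + B 1 0 * A 0 0) * (f 0 : ℂ)⁻¹)
          * slLeadCoeff f w (M + 1)
        + (A 0 0 * B 1 1 - A 1 0 * B 0 1) * f (M + 2) / f 1
          * slLeadCoeff (fun k ↦ f (k + 1)) (fun k ↦ w (k + 1)) (M + 1) := by
  have hχ := slSol_coeff_sub_mul_coeff f q w hf0 (M + 1)
  simp only [slCharPoly, coeff_add, coeff_sub, coeff_C_mul, coeff_C, if_neg M.succ_ne_zero,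
    (slSol_natDegree_le_and_coeff f q w _ _ (M + 1)).2]
  linear_combination (B 0 1 * A 1 1 - B 1 1 * A 0 1) * f (M + 2) * hχ
    + (f (M + 2) * (slSol f q w 0 1 (M + 3)).coeff (M + 1)
      - f (M + 2) / f 1 * slLeadCoeff (fun k ↦ f (k + 1)) (fun k ↦ w (k + 1)) (M + 1)
      - f (M + 2) * (f 0 : ℂ)⁻¹ * slLeadCoeff f w (M + 1)) * hμ
    + (B 0 1 * A 1 1 - B 1 1 * A 0 1) * f (M + 2) * slLeadCoeff f w (M + 1) * mul_inv_cancel₀ hf0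

open ComplexConjugate in
theorem slCharPoly_coeff_pred_ne_zero (M : ℕ)
    (hsa : A * (!![0, 1; -1, 0] : Matrix (Fin 2) (Fin 2) ℂ) * Aᴴ
        = B * (!![0, 1; -1, 0] : Matrix (Fin 2) (Fin 2) ℂ) * Bᴴ)
    (hμ1 : A 0 0 * B 1 1 - A 1 0 * B 0 1 ≠ 0)
    (hμ : A 0 0 * B 1 1 - A 1 0 * B 0 1 = -f 0 * (A 1 1 * B 0 1 - A 0 1 * B 1 1))
    (hf : ∀ n ≤ M + 2, f n ≠ 0) (hw : ∀ n, 1 ≤ n → n ≤ M + 2 → 0 < w n) :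
    (slCharPoly (M + 2) f q w A B).coeff (M + 1) ≠ 0 := by
  have hf0 : (f 0 : ℂ) ≠ 0 := by exact_mod_cast hf 0 (by omega)
  have hlead : slLeadCoeff f w (M + 1) ≠ 0 :=
    slLeadCoeff_ne_zero (fun k _ hk ↦ hf k (by omega)) fun k hk hk' ↦ (hw k hk (by omega)).ne'
  have hshift :
      f (M + 2) / f 1 * slLeadCoeff (fun k ↦ f (k + 1)) (fun k ↦ w (k + 1)) (M + 1) * w 1
      = slLeadCoeff f w (M + 1) * w (M + 2) := by
    have hf1 : (f 1 : ℂ) ≠ 0 := by exact_mod_cast hf 1 (by omega)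
    have hfN : (f (M + 2) : ℂ) ≠ 0 := by exact_mod_cast hf (M + 2) le_rfl
    have h := (slLeadCoeff_succ f w (M + 1)).symm.trans (slLeadCoeff_succ' f w (M + 1))
    field_simp at h ⊢
    linear_combination h
  have hconj : conj (A 0 0 * B 1 1 - A 1 0 * B 0 1)
      = -f 0 * conj (A 1 1 * B 0 1 - A 0 1 * B 1 1) := by
    simpa using congrArg conj hμ
  have key : (slCharPoly (M + 2) f q w A B).coeff (M + 1)
        * conj (A 0 0 * B 1 1 - A 1 0 * B 0 1) * w 1
      = slLeadCoeff f w (M + 1) * ((w 1 * Complex.normSq B.det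
          + w (M + 2) * Complex.normSq (A 0 0 * B 1 1 - A 1 0 * B 0 1) : ℝ) : ℂ) := by
    rw [slCharPoly_coeff_pred f q w A B hf0 hμ]
    push_cast
    linear_combination (slLeadCoeff f w (M + 1) * w 1) * normSq_det_of_selfAdjoint hsa
      + (slLeadCoeff f w (M + 1) * w 1 * (-(B 0 0) * A 1 0 + B 1 0 * A 0 0) * (f 0 : ℂ)⁻¹)
          * hconj
      - (slLeadCoeff f w (M + 1) * w 1 * (-(B 0 0) * A 1 0 + B 1 0 * A 0 0)
          * conj (A 1 1 * B 0 1 - A 0 1 * B 1 1)) * mul_inv_cancel₀ hf0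
      + ((A 0 0 * B 1 1 - A 1 0 * B 0 1) * conj (A 0 0 * B 1 1 - A 1 0 * B 0 1)) * hshift
      + (slLeadCoeff f w (M + 1) * w (M + 2)) * Complex.mul_conj (A 0 0 * B 1 1 - A 1 0 * B 0 1)
  have hpos : 0 < w 1 * Complex.normSq B.det
      + w (M + 2) * Complex.normSq (A 0 0 * B 1 1 - A 1 0 * B 0 1) :=
    add_pos_of_nonneg_of_pos (mul_nonneg (hw 1 le_rfl (by omega)).le (Complex.normSq_nonneg _))
      (mul_pos (hw (M + 2) (by omega) le_rfl) (Complex.normSq_pos.mpr hμ1))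
  intro h
  rw [h, zero_mul, zero_mul, eq_comm, mul_eq_zero, Complex.ofReal_eq_zero] at key
  exact key.elim hlead hpos.ne'

end slCharPoly

theorem eigenvalue_count_mu_general (N : ℕ) (hN : 2 ≤ N)
    (A B : Matrix (Fin 2) (Fin 2) ℂ)
    (hsa : A * (!![0, 1; -1, 0] : Matrix (Fin 2) (Fin 2) ℂ) * Aᴴ
        = B * (!![0, 1; -1, 0] : Matrix (Fin 2) (Fin 2) ℂ) * Bᴴ)
    (hμ1 : A 0 0 * B 1 1 - A 1 0 * B 0 1 ≠ 0)
    (f q w : ℕ → ℝ) (hf : ∀ n ≤ N, f n ≠ 0) (hw : ∀ n, 1 ≤ n → n ≤ N → 0 < w n) :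
    ((((f 0 : ℂ))⁻¹ = -(A 1 1 * B 0 1 - A 0 1 * B 1 1) / (A 0 0 * B 1 1 - A 1 0 * B 0 1) →
        slCharPoly N f q w A B ≠ 0 ∧
        Multiset.card (slCharPoly N f q w A B).roots = N - 1)) ∧
    ((((f 0 : ℂ))⁻¹ ≠ -(A 1 1 * B 0 1 - A 0 1 * B 1 1) / (A 0 0 * B 1 1 - A 1 0 * B 0 1) →
        slCharPoly N f q w A B ≠ 0 ∧
        Multiset.card (slCharPoly N f q w A B).roots = N)) := by
  obtain ⟨M, rfl⟩ : ∃ M, N = M + 2 := ⟨N - 2, by omega⟩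
  have hf0 : (f 0 : ℂ) ≠ 0 := by exact_mod_cast hf 0 (by omega)
  have hfN : (f (M + 2) : ℂ) ≠ 0 := by exact_mod_cast hf (M + 2) le_rfl
  have hlead : slLeadCoeff f w (M + 2) ≠ 0 :=
    slLeadCoeff_ne_zero (fun k _ hk ↦ hf k hk) fun k hk hk' ↦ (hw k hk hk').ne'
  have htop := slCharPoly_coeff_top f q w A B (M + 1)
  have hdeg := slCharPoly_natDegree_le f q w A B (M + 2)
  refine ⟨fun h ↦ ?_, fun h ↦ ?_⟩
  · have hμ : A 0 0 * B 1 1 - A 1 0 * B 0 1 = -f 0 * (A 1 1 * B 0 1 - A 0 1 * B 1 1) := by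
      rw [eq_div_iff hμ1] at h
      linear_combination (f 0 : ℂ) * h - (A 0 0 * B 1 1 - A 1 0 * B 0 1) * mul_inv_cancel₀ hf0
    have htop_zero : (slCharPoly (M + 2) f q w A B).coeff (M + 2) = 0 := by
      rw [htop]
      linear_combination f (M + 2) * slLeadCoeff f w (M + 2) * ((f 0 : ℂ)⁻¹ * hμ
        - (A 1 1 * B 0 1 - A 0 1 * B 1 1) * mul_inv_cancel₀ hf0)
    simpa using ne_zero_and_card_roots_eq (natDegree_le_pred hdeg htop_zero)
      (slCharPoly_coeff_pred_ne_zero f q w A B M hsa hμ1 hμ hf hw)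
  · refine ne_zero_and_card_roots_eq hdeg ?_
    rw [htop]
    refine mul_ne_zero (mul_ne_zero hfN hlead) fun h' ↦ h ?_
    rw [eq_div_iff hμ1]
    linear_combination h'

/-- Fix a self-adjoint boundary condition `(A|B)` and set
`μ₁ = a₁₁b₂₂ - a₂₁b₁₂`, `μ₂ = a₂₂b₁₂ - a₁₂b₂₂`.  If `μ₁ ≠ 0` and `μ₂ ≠ 0`, then for
every equation `ω = (1/f, q, w)` the problem `(ω, A|B)` has exactly `N-1` eigenvalues
when `1/f₀ = -μ₂/μ₁`, and exactly `N` eigenvalues when `1/f₀ ≠ -μ₂/μ₁`. -/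
theorem eigenvalue_count_mu (N : ℕ) (hN : 2 ≤ N)
    (A B : Matrix (Fin 2) (Fin 2) ℂ)
    (hrank : (slAugment A B).rank = 2)
    (hsa : A * (!![0, 1; -1, 0] : Matrix (Fin 2) (Fin 2) ℂ) * Aᴴ
        = B * (!![0, 1; -1, 0] : Matrix (Fin 2) (Fin 2) ℂ) * Bᴴ)
    (hμ1 : A 0 0 * B 1 1 - A 1 0 * B 0 1 ≠ 0)
    (hμ2 : A 1 1 * B 0 1 - A 0 1 * B 1 1 ≠ 0)
    (f q w : ℕ → ℝ) (hf : ∀ n ≤ N, f n ≠ 0) (hw : ∀ n, 1 ≤ n → n ≤ N → 0 < w n) :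
    ((((f 0 : ℂ))⁻¹ = -(A 1 1 * B 0 1 - A 0 1 * B 1 1) / (A 0 0 * B 1 1 - A 1 0 * B 0 1) →
        slCharPoly N f q w A B ≠ 0 ∧
        Multiset.card (slCharPoly N f q w A B).roots = N - 1)) ∧
    ((((f 0 : ℂ))⁻¹ ≠ -(A 1 1 * B 0 1 - A 0 1 * B 1 1) / (A 0 0 * B 1 1 - A 1 0 * B 0 1) →
        slCharPoly N f q w A B ≠ 0 ∧
        Multiset.card (slCharPoly N f q w A B).roots = N)) :=
  eigenvalue_count_mu_general N hN A B hsa hμ1 f q w hf hw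
end

section
/- Fix a discrete Sturm-Liouville equation with data f (f_n≠0), q, w (w_n>0) and coefficient f_0. For a separated boundary condition S_{α,β} given by cos α·y_0 - sin α·(f_0Δy_0)=0 and cos β·y_N - sin β·(f_NΔy_N)=0 with α∈[0,π), β∈(0,π], the problem has exactly N-2 eigenvalues if (α,β)=(ξ,π), exactly N-1 eigenvalues if α=ξ or β=π but not both, and exactly N eigenvalues otherwise, where ξ∈(0,π)\{π/2} is the unique angle with tan ξ = -1/f_0. -/
open Polynomial Matrix Real

lemma slSol_step (f q w : ℕ → ℝ) (y0 d0 : ℂ) (n : ℕ) :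
    slSol f q w y0 d0 (n+2) = slSol f q w y0 d0 (n + 1) + C ((f (n + 1) : ℂ))⁻¹ *
        (C ((f n : ℂ)) * (slSol f q w y0 d0 (n + 1) - slSol f q w y0 d0 n)
          + C ((q (n + 1) : ℂ)) * slSol f q w y0 d0 (n + 1)
          - X * C ((w (n + 1) : ℂ)) * slSol f q w y0 d0 (n + 1)) := rfl

lemma slSol_zero (f q w : ℕ → ℝ) (y0 d0 : ℂ) : slSol f q w y0 d0 0 = C y0 := rfl

lemma slSol_one (f q w : ℕ → ℝ) (y0 d0 : ℂ) : slSol f q w y0 d0 1 = C (y0 + d0 / (f 0 : ℂ)) := rfl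

lemma slSol_comb (f q w : ℕ → ℝ) (a b : ℂ) : ∀ n,
    slSol f q w a b n = C a * slSol f q w 1 0 n + C b * slSol f q w 0 1 n := by
  intro n
  induction n using Nat.strong_induction_on with
  | _ n ih =>
    match n with
    | 0 => simp [slSol_zero]
    | 1 =>
      simp only [slSol_one, ← C_mul, ← C_add]
      congr 1; ring
    | n+2 =>
      rw [slSol_step, slSol_step, slSol_step, ih (n+1) (by omega), ih n (by omega)]
      ring

lemma degree_C_mul_le (d : WithBot ℕ) (c : ℂ) (p : Polynomial ℂ) (hp : p.degree ≤ d) :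
    (C c * p).degree ≤ d := by
  refine le_trans (degree_mul_le _ _) ?_
  calc (C c).degree + p.degree ≤ 0 + d := add_le_add degree_C_le hp
  _ = d := zero_add d

lemma slSol_degree_step (f q w : ℕ → ℝ) (y0 d0 : ℂ) (n : ℕ) (d : ℕ)
    (hf1 : f (n+1) ≠ 0) (hw1 : w (n+1) ≠ 0)
    (h1 : (slSol f q w y0 d0 (n+1)).degree = (d : WithBot ℕ))
    (h0 : (slSol f q w y0 d0 n).degree ≤ (d : WithBot ℕ)) :
    (slSol f q w y0 d0 (n+2)).degree = ((d+1 : ℕ) : WithBot ℕ) := by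
  set s := slSol f q w y0 d0 with hs
  have hc : -(((f (n+1) : ℝ) : ℂ)⁻¹ * ((w (n+1) : ℝ) : ℂ)) ≠ 0 := by
    simp [hf1, hw1]
  have hrw : s (n+2) = C (-(((f (n+1) : ℝ) : ℂ)⁻¹ * ((w (n+1) : ℝ) : ℂ))) * (X * s (n+1))
      + (s (n+1) + C (((f (n+1) : ℝ) : ℂ))⁻¹ *
        (C (((f n : ℝ) : ℂ)) * (s (n+1) - s n) + C (((q (n+1) : ℝ) : ℂ)) * s (n+1))) := by
    rw [hs, slSol_step]
    simp only [map_neg, C_mul]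
    ring
  have hmain : (C (-(((f (n+1) : ℝ) : ℂ)⁻¹ * ((w (n+1) : ℝ) : ℂ))) * (X * s (n+1))).degree
      = ((d+1 : ℕ) : WithBot ℕ) := by
    rw [degree_C_mul hc, degree_mul, degree_X, h1]
    push_cast
    ring
  have hrest : (s (n+1) + C (((f (n+1) : ℝ) : ℂ))⁻¹ *
      (C (((f n : ℝ) : ℂ)) * (s (n+1) - s n) + C (((q (n+1) : ℝ) : ℂ)) * s (n+1))).degree
      ≤ (d : WithBot ℕ) := by
    refine le_trans (degree_add_le _ _) (max_le h1.le ?_)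
    refine degree_C_mul_le _ _ _ ?_
    refine le_trans (degree_add_le _ _) (max_le ?_ ?_)
    · exact degree_C_mul_le _ _ _ (le_trans (degree_sub_le _ _) (max_le h1.le h0))
    · exact degree_C_mul_le _ _ _ h1.le
  rw [hrw, degree_add_eq_left_of_degree_lt, hmain]
  rw [hmain]
  refine lt_of_le_of_lt hrest ?_
  exact_mod_cast Nat.lt_succ_self d

lemma slSol_degree (N : ℕ) (f q w : ℕ → ℝ) (y0 d0 : ℂ)
    (hf : ∀ k ≤ N, f k ≠ 0) (hw : ∀ k, 1 ≤ k → k ≤ N → w k ≠ 0)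
    (m : ℕ) (hm1 : 1 ≤ m) (hmN : m ≤ N)
    (h0 : (slSol f q w y0 d0 (m-1)).degree ≤ 0)
    (h1 : (slSol f q w y0 d0 m).degree = 0) :
    ∀ k, m + k ≤ N + 1 → (slSol f q w y0 d0 (m + k)).degree = (k : WithBot ℕ) := by
  intro k
  induction k using Nat.strong_induction_on with
  | _ k ih =>
    match k with
    | 0 => intro _; simpa using h1
    | 1 =>
      intro hk
      obtain ⟨j, rfl⟩ : ∃ j, m = j + 1 := ⟨m-1, by omega⟩
      have step := slSol_degree_step f q w y0 d0 j 0
        (hf (j+1) (by omega)) (hw (j+1) (by omega) (by omega))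
        (by exact_mod_cast h1) (by simpa using h0)
      simpa using step
    | k+2 =>
      intro hk
      have h2 : (slSol f q w y0 d0 ((m + k) + 1)).degree = ((k+1 : ℕ) : WithBot ℕ) := by
        have := ih (k+1) (by omega) (by omega)
        convert this using 3 <;> omega
      have h3 : (slSol f q w y0 d0 (m + k)).degree ≤ ((k+1 : ℕ) : WithBot ℕ) := by
        have := ih k (by omega) (by omega)
        rw [this]
        exact_mod_cast Nat.le_succ k
      have step := slSol_degree_step f q w y0 d0 (m+k) (k+1)
        (hf (m+k+1) (by omega)) (hw (m+k+1) (by omega) (by omega)) h2 h3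
      convert step using 3 <;> omega

/-- The `A`-matrix of the separated boundary condition `S_{α,β}`:
`cos α · y₀ - sin α · (f₀Δy₀) = 0`. -/
noncomputable def sepA (α : ℝ) : Matrix (Fin 2) (Fin 2) ℂ :=
  !![(Real.cos α : ℂ), -(Real.sin α : ℂ); 0, 0]

/-- The `B`-matrix of the separated boundary condition `S_{α,β}`:
`cos β · y_N - sin β · (f_NΔy_N) = 0`. -/
noncomputable def sepB (β : ℝ) : Matrix (Fin 2) (Fin 2) ℂ :=
  !![0, 0; (Real.cos β : ℂ), -(Real.sin β : ℂ)]

lemma charPoly_sep (N : ℕ) (f q w : ℕ → ℝ) (α β : ℝ) :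
    slCharPoly N f q w (sepA α) (sepB β) =
      C ((Real.cos β : ℂ)) * slSol f q w (Real.sin α : ℂ) (Real.cos α : ℂ) N
      - C ((Real.sin β : ℂ) * ((f N : ℝ) : ℂ)) *
        (slSol f q w (Real.sin α : ℂ) (Real.cos α : ℂ) (N+1)
          - slSol f q w (Real.sin α : ℂ) (Real.cos α : ℂ) N) := by
  rw [slCharPoly]
  simp only [sepA, sepB, Matrix.det_fin_two_of, Matrix.cons_val', Matrix.cons_val_zero,
    Matrix.cons_val_one, Matrix.head_cons, Matrix.head_fin_const, Matrix.empty_val',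
    Matrix.cons_val_fin_one, Matrix.of_apply]
  rw [slSol_comb f q w ((Real.sin α : ℝ) : ℂ) ((Real.cos α : ℝ) : ℂ) N, slSol_comb f q w ((Real.sin α : ℝ) : ℂ) ((Real.cos α : ℝ) : ℂ) (N+1)]
  simp only [map_neg, C_mul, map_add, map_sub, map_zero, _root_.map_one]
  ring

lemma card_roots_of_degree {p : Polynomial ℂ} {n : ℕ} (h : p.degree = (n : WithBot ℕ)) :
    p ≠ 0 ∧ Multiset.card p.roots = n := by
  have hp : p ≠ 0 := fun h0 => by simp [h0] at h
  refine ⟨hp, ?_⟩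
  rw [← natDegree_eq_of_degree_eq_some h]
  exact Polynomial.splits_iff_card_roots.mp (IsAlgClosed.splits p)

lemma gamma_count (N : ℕ) (f q w : ℕ → ℝ) (α β : ℝ)
    (hf : ∀ k ≤ N, f k ≠ 0) (hw : ∀ k, 1 ≤ k → k ≤ N → w k ≠ 0)
    (m : ℕ) (hm1 : 1 ≤ m) (hmN : m ≤ N)
    (h0 : (slSol f q w ((Real.sin α : ℝ) : ℂ) ((Real.cos α : ℝ) : ℂ) (m-1)).degree ≤ 0)
    (h1 : (slSol f q w ((Real.sin α : ℝ) : ℂ) ((Real.cos α : ℝ) : ℂ) m).degree = 0) :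
    (β = Real.pi → slCharPoly N f q w (sepA α) (sepB β) ≠ 0 ∧
      Multiset.card (slCharPoly N f q w (sepA α) (sepB β)).roots = N - m) ∧
    (Real.sin β ≠ 0 → slCharPoly N f q w (sepA α) (sepB β) ≠ 0 ∧
      Multiset.card (slCharPoly N f q w (sepA α) (sepB β)).roots = N + 1 - m) := by
  set s := slSol f q w ((Real.sin α : ℝ) : ℂ) ((Real.cos α : ℝ) : ℂ) with hs
  have key := slSol_degree N f q w _ _ hf hw m hm1 hmN h0 h1
  have hdN : (s N).degree = ((N - m : ℕ) : WithBot ℕ) := by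
    have := key (N - m) (by omega)
    rwa [show m + (N - m) = N by omega] at this
  have hdN1 : (s (N+1)).degree = ((N + 1 - m : ℕ) : WithBot ℕ) := by
    have := key (N + 1 - m) (by omega)
    rwa [show m + (N + 1 - m) = N + 1 by omega] at this
  have hlt : (s N).degree < (s (N+1)).degree := by
    rw [hdN, hdN1]
    exact_mod_cast (by omega : N - m < N + 1 - m)
  have hsub : (s (N+1) - s N).degree = ((N + 1 - m : ℕ) : WithBot ℕ) := by
    rw [degree_sub_eq_left_of_degree_lt hlt, hdN1]
  constructor
  · intro hβ
    have hΓ : slCharPoly N f q w (sepA α) (sepB β) = -(s N) := by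
      rw [charPoly_sep, hβ, ← hs]
      simp
    refine card_roots_of_degree ?_
    rw [hΓ, degree_neg, hdN]
  · intro hβ
    have hc : ((Real.sin β : ℝ) : ℂ) * ((f N : ℝ) : ℂ) ≠ 0 :=
      mul_ne_zero (Complex.ofReal_ne_zero.mpr hβ) (Complex.ofReal_ne_zero.mpr (hf N le_rfl))
    have hd2 : (C (((Real.sin β : ℝ) : ℂ) * ((f N : ℝ) : ℂ)) * (s (N+1) - s N)).degree
        = ((N + 1 - m : ℕ) : WithBot ℕ) := by
      rw [degree_C_mul hc, hsub]
    refine card_roots_of_degree ?_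
    rw [charPoly_sep, ← hs, degree_sub_eq_right_of_degree_lt, hd2]
    rw [hd2]
    refine lt_of_le_of_lt (degree_C_mul_le _ _ _ hdN.le) ?_
    exact_mod_cast (by omega : N - m < N + 1 - m)

lemma alpha_ne (f0 α ξ : ℝ) (hα : α ∈ Set.Ico 0 Real.pi) (hξ : ξ ∈ Set.Ioo 0 Real.pi)
    (hξeq : Real.cos ξ + f0 * Real.sin ξ = 0) (hne : α ≠ ξ) :
    Real.cos α + f0 * Real.sin α ≠ 0 := by
  intro h
  have hs : Real.sin (ξ - α) = 0 := by
    rw [Real.sin_sub]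
    linear_combination Real.sin ξ * h - Real.sin α * hξeq
  have h1 : -Real.pi < ξ - α := by
    have := hξ.1; have := hα.2; linarith
  have h2 : ξ - α < Real.pi := by
    have := hξ.2; have := hα.1; linarith
  have := (Real.sin_eq_zero_iff_of_lt_of_lt h1 h2).mp hs
  exact hne (by linarith)

/-- For a separated boundary condition `S_{α,β}` (`α ∈ [0,π)`, `β ∈ (0,π]`), the problem
has exactly `N-2` eigenvalues if `(α,β) = (ξ,π)`, exactly `N-1` if `α = ξ` or `β = π`
but not both, and exactly `N` otherwise, where `ξ ∈ (0,π) \ {π/2}` is the unique angle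
with `cos ξ + f₀ sin ξ = 0` (i.e. `tan ξ = -1/f₀`). -/
theorem eigenvalue_count_separated (N : ℕ) (hN : 2 ≤ N) (f q w : ℕ → ℝ)
    (hf : ∀ n ≤ N, f n ≠ 0) (hw : ∀ n, 1 ≤ n → n ≤ N → 0 < w n)
    (α β ξ : ℝ) (hα : α ∈ Set.Ico 0 Real.pi) (hβ : β ∈ Set.Ioc 0 Real.pi)
    (hξ : ξ ∈ Set.Ioo 0 Real.pi) (hξ' : ξ ≠ Real.pi / 2)
    (hξeq : Real.cos ξ + f 0 * Real.sin ξ = 0) :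
    (α = ξ ∧ β = Real.pi →
      slCharPoly N f q w (sepA α) (sepB β) ≠ 0 ∧
      Multiset.card (slCharPoly N f q w (sepA α) (sepB β)).roots = N - 2) ∧
    ((α = ξ ∧ β ≠ Real.pi) ∨ (α ≠ ξ ∧ β = Real.pi) →
      slCharPoly N f q w (sepA α) (sepB β) ≠ 0 ∧
      Multiset.card (slCharPoly N f q w (sepA α) (sepB β)).roots = N - 1) ∧
    (α ≠ ξ ∧ β ≠ Real.pi →
      slCharPoly N f q w (sepA α) (sepB β) ≠ 0 ∧
      Multiset.card (slCharPoly N f q w (sepA α) (sepB β)).roots = N) := by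
  have hw' : ∀ k, 1 ≤ k → k ≤ N → w k ≠ 0 := fun k h1 h2 => (hw k h1 h2).ne'
  have hf0 : f 0 ≠ 0 := hf 0 (by omega)
  have hsinξ : Real.sin ξ ≠ 0 := (Real.sin_pos_of_pos_of_lt_pi hξ.1 hξ.2).ne'
  have hsinβ : β ≠ Real.pi → Real.sin β ≠ 0 := fun hne =>
    (Real.sin_pos_of_pos_of_lt_pi hβ.1 (lt_of_le_of_ne hβ.2 hne)).ne'
  -- case α = ξ : degree facts with m = 2
  have hcase2 : α = ξ → (β = Real.pi → slCharPoly N f q w (sepA α) (sepB β) ≠ 0 ∧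
      Multiset.card (slCharPoly N f q w (sepA α) (sepB β)).roots = N - 2) ∧
      (Real.sin β ≠ 0 → slCharPoly N f q w (sepA α) (sepB β) ≠ 0 ∧
      Multiset.card (slCharPoly N f q w (sepA α) (sepB β)).roots = N - 1) := by
    intro hαξ
    subst hαξ
    have hs1 : slSol f q w ((Real.sin α : ℝ) : ℂ) ((Real.cos α : ℝ) : ℂ) 1 = 0 := by
      rw [slSol_one]
      have hval : Real.sin α + Real.cos α / f 0 = 0 := by
        field_simp
        linarith [hξeq]
      have : ((Real.sin α : ℝ) : ℂ) + ((Real.cos α : ℝ) : ℂ) / ((f 0 : ℝ) : ℂ) = 0 := by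
        exact_mod_cast congrArg (fun x : ℝ => (x : ℂ)) hval
      rw [this, map_zero]
    have hs2 : slSol f q w ((Real.sin α : ℝ) : ℂ) ((Real.cos α : ℝ) : ℂ) 2 =
        C (((f 1 : ℝ) : ℂ)⁻¹ * ((f 0 : ℝ) : ℂ) * (-((Real.sin α : ℝ) : ℂ))) := by
      rw [slSol_step f q w _ _ 0, hs1, slSol_zero]
      simp only [map_neg, C_mul]
      ring
    have hc2 : ((f 1 : ℝ) : ℂ)⁻¹ * ((f 0 : ℝ) : ℂ) * (-((Real.sin α : ℝ) : ℂ)) ≠ 0 := by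
      refine mul_ne_zero (mul_ne_zero ?_ ?_) ?_
      · exact inv_ne_zero (Complex.ofReal_ne_zero.mpr (hf 1 (by omega)))
      · exact Complex.ofReal_ne_zero.mpr hf0
      · exact neg_ne_zero.mpr (Complex.ofReal_ne_zero.mpr hsinξ)
    have := gamma_count N f q w α β hf hw' 2 (by omega) hN
      (by rw [show (2:ℕ)-1 = 1 from rfl, hs1]; simp)
      (by rw [hs2, degree_C hc2])
    refine ⟨fun h => ?_, fun h => ?_⟩
    · exact (this.1 h)
    · have := this.2 h
      rwa [show N + 1 - 2 = N - 1 by omega] at this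
  -- case α ≠ ξ : degree facts with m = 1
  have hcase1 : α ≠ ξ → (β = Real.pi → slCharPoly N f q w (sepA α) (sepB β) ≠ 0 ∧
      Multiset.card (slCharPoly N f q w (sepA α) (sepB β)).roots = N - 1) ∧
      (Real.sin β ≠ 0 → slCharPoly N f q w (sepA α) (sepB β) ≠ 0 ∧
      Multiset.card (slCharPoly N f q w (sepA α) (sepB β)).roots = N) := by
    intro hαξ
    have hval : Real.sin α + Real.cos α / f 0 ≠ 0 := by
      have hne := alpha_ne (f 0) α ξ hα hξ hξeq hαξ
      intro h
      apply hne
      field_simp at h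
      linarith
    have hs1 : slSol f q w ((Real.sin α : ℝ) : ℂ) ((Real.cos α : ℝ) : ℂ) 1 =
        C (((Real.sin α + Real.cos α / f 0 : ℝ) : ℂ)) := by
      rw [slSol_one]; push_cast; ring_nf
    have := gamma_count N f q w α β hf hw' 1 (by omega) (by omega)
      (by rw [show (1:ℕ)-1 = 0 from rfl, slSol_zero]; exact degree_C_le)
      (by rw [hs1]; exact degree_C (Complex.ofReal_ne_zero.mpr hval))
    refine ⟨fun h => this.1 h, fun h => ?_⟩
    have := this.2 h
    rwa [show N + 1 - 1 = N by omega] at this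
  refine ⟨fun ⟨h1, h2⟩ => (hcase2 h1).1 h2, fun h => ?_, fun ⟨h1, h2⟩ => (hcase1 h1).2 (hsinβ h2)⟩
  rcases h with ⟨h1, h2⟩ | ⟨h1, h2⟩
  · exact (hcase2 h1).2 (hsinβ h2)
  · exact (hcase1 h1).1 h2
end

section
/- For the separated boundary condition S_{α,β} (cos α·y_0 - sin α·f_0Δy_0 = 0, cos β·y_N - sin β·f_NΔy_N = 0) with fixed equation data and fixed β_0∈(0,π), and for each n, the n-th eigenvalue function α ↦ λ_n(S_{α,β_0}) is strictly decreasing on each of the intervals [0,ξ) and (ξ,π), where ξ is the unique angle in (0,π) with cos ξ + f_0 sin ξ = 0, and satisfies lim_{α→π^-} λ_n(α) = λ_n(0) for all 0≤n≤N-1. -/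
open Polynomial Matrix Real Filter

/-- The real zeros of `Γ` (with multiplicity), listed in increasing order. -/
noncomputable def eigList (Γ : Polynomial ℂ) : List ℝ :=
  ((Γ.roots.filter (fun z => z.im = 0)).map Complex.re).sort (· ≤ ·)

/-- The `n`-th eigenvalue (0-indexed, in increasing order, with multiplicity). -/
noncomputable def nthEig (Γ : Polynomial ℂ) (n : ℕ) : ℝ :=
  (eigList Γ).getD n 0

/-!
Let `z` be the solution of the equation satisfying the boundary condition at `N`. The Wronskian
identity gives `Γ(α) = -(cos α + f₀ sin α) z₀ + f₀ sin α z₁`. Running the three-term recurrence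
down from `N` shows that `z₁` and `z₀` are nonzero multiples of monic polynomials `P_μ` and `P_ν`
of degrees `N - 1` and `N` whose roots strictly interlace, so `Γ(α)` is a nonzero multiple of
the pencil `P_ν - τ P_μ` with `τ(α) = -f₀² sin α / (w₁ (cos α + f₀ sin α))`. The roots of
`P_ν - τ P_μ` interlace those of `P_μ`, so its `n`-th root stays in the `n`-th gap between
the roots of `P_μ`, and there it is a strictly increasing, continuous function of `τ` (its
inverse is `P_ν / P_μ`). Finally, `τ` is strictly decreasing wherever `cos α + f₀ sin α` keeps
its sign, that is on `[0, ξ)` and on `(ξ, π)`, and `τ(α) → 0 = τ(0)` as `α → π`.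
-/

namespace DiscreteSL

noncomputable def rootProd (m : ℕ) (g : ℕ → ℝ) : ℝ[X] := ∏ i ∈ Finset.range m, (X - C (g i))

section RootProd

variable {m : ℕ} {g : ℕ → ℝ} {x : ℝ}

lemma rootProd_monic : (rootProd m g).Monic :=
  monic_prod_of_monic _ _ fun i _ => monic_X_sub_C (g i)

lemma natDegree_rootProd : (rootProd m g).natDegree = m := by
  rw [rootProd, natDegree_prod _ _ fun i _ => X_sub_C_ne_zero (g i)]
  simp

lemma eval_rootProd : (rootProd m g).eval x = ∏ i ∈ Finset.range m, (x - g i) := by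
  simp [rootProd, eval_prod]

lemma eval_rootProd_self {i : ℕ} (hi : i < m) : (rootProd m g).eval (g i) = 0 := by
  rw [eval_rootProd]
  exact Finset.prod_eq_zero (Finset.mem_range.mpr hi) (sub_self _)

lemma rootProd_eq_multiset_prod :
    rootProd m g = (((Multiset.range m).map g).map fun a => X - C a).prod := by
  rw [rootProd, Finset.prod_eq_multiset_prod, Multiset.map_map]
  rfl

lemma eq_rootProd_of_isRoot {F : ℝ[X]} (hF : F.Monic) (hdeg : F.natDegree = m)
    (hg : Set.InjOn g (Set.Iio m)) (hroot : ∀ i < m, F.IsRoot (g i)) : F = rootProd m g := by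
  set s := (Multiset.range m).map g
  have hs : s.Nodup := (Multiset.nodup_range m).map_on fun i hi j hj hij =>
    hg (Multiset.mem_range.mp hi) (Multiset.mem_range.mp hj) hij
  have hsub : s ≤ F.roots := (Multiset.le_iff_subset hs).mpr fun a ha => by
    obtain ⟨i, hi, rfl⟩ := Multiset.mem_map.mp ha
    exact (mem_roots hF.ne_zero).mpr (hroot i (Multiset.mem_range.mp hi))
  have hroots : s = F.roots := Multiset.eq_of_le_of_card_le hsub <| by
    simpa [s, hdeg] using F.card_roots'
  rw [rootProd_eq_multiset_prod, ← prod_multiset_X_sub_C_of_monic_of_roots_card_eq hF]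
  · rw [← hroots]
  · rw [← hroots, hdeg]
    simp [s]

lemma exists_eval_eq_zero_of_mul_neg (F : ℝ[X]) {a b : ℝ} (hab : a < b)
    (h : F.eval a * F.eval b < 0) : ∃ c ∈ Set.Ioo a b, F.eval c = 0 := by
  rcases mul_neg_iff.mp h with ⟨ha, hb⟩ | ⟨ha, hb⟩
  · exact intermediate_value_Ioo' hab.le F.continuousOn ⟨hb, ha⟩
  · exact intermediate_value_Ioo hab.le F.continuousOn ⟨ha, hb⟩

lemma mul_neg_of_neg_one_pow_mul_pos {a b : ℝ} {e : ℕ} (ha : 0 < (-1) ^ (e + 1) * a)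
    (hb : 0 < (-1) ^ e * b) : a * b < 0 := by
  have hsq : ((-1 : ℝ) ^ e) ^ 2 = 1 := by rw [← pow_mul, mul_comm, pow_mul, neg_one_sq, one_pow]
  have hprod : (-1) ^ (e + 1) * a * ((-1) ^ e * b) = -(a * b) := by
    rw [pow_succ]
    linear_combination (-(a * b)) * hsq
  linarith [mul_pos ha hb]

open Asymptotics in
lemma exists_lt_neg_one_pow_mul_eval_pos {F : ℝ[X]} (hF : F.Monic) (hd : 0 < F.natDegree)
    (B : ℝ) : ∃ x < B, 0 < (-1) ^ F.natDegree * F.eval x := by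
  have hequiv : (fun x => (-1) ^ F.natDegree * F.eval x) ~[atBot]
      fun x => (-x) ^ F.natDegree := by
    have := (IsEquivalent.refl (u := fun _ : ℝ => ((-1 : ℝ) ^ F.natDegree))
      (l := atBot)).mul F.isEquivalent_atBot_lead
    rw [hF.leadingCoeff] at this
    convert this using 1 <;> ext x <;> simp [neg_pow x]
  have htend : Tendsto (fun x : ℝ => (-x) ^ F.natDegree) atBot atTop :=
    (tendsto_pow_atTop hd.ne').comp tendsto_neg_atBot_atTop
  obtain ⟨x, hx, hxB⟩ := (((hequiv.symm.tendsto_atTop htend).eventually_gt_atTop 0).and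
    (eventually_lt_atBot B)).exists
  exact ⟨x, hxB, hx⟩

lemma exists_gt_eval_pos {F : ℝ[X]} (hF : F.Monic) (hd : 0 < F.natDegree) (B : ℝ) :
    ∃ x > B, 0 < F.eval x := by
  have htend := F.tendsto_atTop_of_leadingCoeff_nonneg (natDegree_pos_iff_degree_pos.mp hd)
    (by rw [hF.leadingCoeff]; exact zero_le_one)
  obtain ⟨x, hx, hxB⟩ := ((htend.eventually_gt_atTop 0).and (eventually_gt_atTop B)).exists
  exact ⟨x, hxB, hx⟩

lemma monic_sub_of_natDegree_lt {F G : ℝ[X]} (hF : F.Monic) (hG : G.natDegree < F.natDegree) :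
    (F - G).Monic ∧ (F - G).natDegree = F.natDegree :=
  ⟨hF.sub_of_left (degree_lt_degree hG), natDegree_sub_eq_left_of_natDegree_lt hG⟩

lemma neg_one_pow_card_mul_prod_pos {s : Finset ℕ} (h : ∀ i ∈ s, g i < 0) :
    0 < (-1 : ℝ) ^ s.card * ∏ i ∈ s, g i := by
  rw [← Finset.prod_const, ← Finset.prod_mul_distrib]
  exact Finset.prod_pos fun i hi => by linarith [h i hi]

lemma exists_eq_rootProd_of_alternating {F : ℝ[X]} {d : ℕ} (hF : F.Monic)
    (hdeg : F.natDegree = d) {p : ℕ → ℝ} (hp : StrictMonoOn p (Set.Iic d))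
    (hsign : ∀ i ≤ d, 0 < (-1) ^ (d - i) * F.eval (p i)) :
    ∃ κ : ℕ → ℝ, (∀ i < d, p i < κ i ∧ κ i < p (i + 1)) ∧ F = rootProd d κ := by
  have hgap : ∀ i, ∃ c, i < d → c ∈ Set.Ioo (p i) (p (i + 1)) ∧ F.eval c = 0 := fun i => by
    by_cases hi : i < d
    · have hsi := hsign i hi.le
      rw [show d - i = d - (i + 1) + 1 by omega] at hsi
      obtain ⟨c, hc⟩ := exists_eval_eq_zero_of_mul_neg F (hp (by simp; omega) (by simp; omega)
        i.lt_succ_self) (mul_neg_of_neg_one_pow_mul_pos hsi (hsign (i + 1) hi))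
      exact ⟨c, fun _ => hc⟩
    · exact ⟨0, fun h => absurd h hi⟩
  choose κ hκ using hgap
  refine ⟨κ, fun i hi => (hκ i hi).1, eq_rootProd_of_isRoot hF hdeg ?_ fun i hi => (hκ i hi).2⟩
  have hκmono : StrictMonoOn κ (Set.Iio d) := fun i hi j hj hij =>
    calc κ i < p (i + 1) := (hκ i hi).1.2
      _ ≤ p j := hp.monotoneOn (by simp at hj ⊢; omega) (by simp at hj ⊢; omega) hij
      _ < κ j := (hκ j hj).1.1
  exact hκmono.injOn

end RootProd

section Interlacing

/-- The `n`-th gap of the points `g₀ < g₁ < ⋯ < g_{k-1}` (unbounded for `n = 0` and `n = k`). -/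
def slot (k : ℕ) (g : ℕ → ℝ) (n : ℕ) : Set ℝ :=
  {x | (∀ j < n, g j < x) ∧ ∀ j, n ≤ j → j < k → x < g j}

/-- `μ` interlaces `ν` strictly: `ν₀ < μ₀ < ν₁ < μ₁ < ⋯ < μ_{k-1} < ν_k`. -/
def Interlace (k : ℕ) (μ ν : ℕ → ℝ) : Prop := ∀ i < k, ν i < μ i ∧ μ i < ν (i + 1)

variable {m k n : ℕ} {g μ ν L : ℕ → ℝ} {x : ℝ}

lemma isOpen_slot : IsOpen (slot k g n) := by
  have hlow : {x | ∀ j < n, g j < x} = ⋂ j ∈ Set.Iio n, Set.Ioi (g j) := by ext; simp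
  have hup : {x | ∀ j, n ≤ j → j < k → x < g j} = ⋂ j ∈ Set.Ico n k, Set.Iio (g j) := by
    ext; simp [and_imp]
  rw [slot, Set.ofPred_and, hlow, hup]
  exact ((Set.finite_Iio n).isOpen_biInter fun _ _ => isOpen_Ioi).inter
    ((Set.finite_Ico n k).isOpen_biInter fun _ _ => isOpen_Iio)

lemma neg_one_pow_mul_eval_rootProd_pos (hn : n ≤ k) (hx : x ∈ slot k g n) :
    0 < (-1 : ℝ) ^ (k - n) * (rootProd k g).eval x := by
  have hlow : 0 < ∏ i ∈ Finset.range n, (x - g i) :=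
    Finset.prod_pos fun i hi => sub_pos.mpr (hx.1 i (Finset.mem_range.mp hi))
  have hup := neg_one_pow_card_mul_prod_pos (g := fun i => x - g i) (s := Finset.Ico n k)
    fun i hi => sub_neg.mpr (hx.2 i (Finset.mem_Ico.mp hi).1 (Finset.mem_Ico.mp hi).2)
  rw [Nat.card_Ico] at hup
  rw [eval_rootProd, ← Finset.prod_range_mul_prod_Ico _ hn, mul_left_comm]
  exact mul_pos hlow hup

namespace Interlace

lemma strictMonoOn_right (h : Interlace k μ ν) : StrictMonoOn ν (Set.Iic k) :=
  strictMonoOn_Iic_of_lt_succ fun i hi => (h i hi).1.trans (h i hi).2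

lemma left_lt_right (h : Interlace k μ ν) {i j : ℕ} (hij : i < j) (hj : j ≤ k) : μ i < ν j :=
  (h i (by omega)).2.trans_le <|
    h.strictMonoOn_right.monotoneOn (by simp; omega) (by simpa using hj) hij

lemma right_lt_left (h : Interlace k μ ν) {i j : ℕ} (hij : i ≤ j) (hj : j < k) : ν i < μ j :=
  (h.strictMonoOn_right.monotoneOn (by simp; omega) (by simp; omega) hij).trans_lt (h j hj).1

lemma strictMonoOn_left (h : Interlace k μ ν) : StrictMonoOn μ (Set.Iio k) :=
  fun _ _ j hj hij => (h.left_lt_right hij (le_of_lt hj)).trans (h j hj).1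

lemma right_mem_slot (h : Interlace k μ ν) {i : ℕ} (hi : i ≤ k) : ν i ∈ slot k μ i :=
  ⟨fun _ hj => h.left_lt_right hj hi, fun _ hj hj' => h.right_lt_left hj hj'⟩

lemma left_mem_slot (h : Interlace k μ ν) {i : ℕ} (hi : i < k) : μ i ∈ slot (k + 1) ν (i + 1) :=
  ⟨fun _ hj => h.right_lt_left (by omega) hi, fun _ hj hj' => h.left_lt_right (by omega) (by omega)⟩

end Interlace

lemma exists_interlace_of_alternating {F : ℝ[X]} (hF : F.Monic) (hdeg : F.natDegree = m + 1)
    {p : ℕ → ℝ} (hp : StrictMonoOn p (Set.Iio m))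
    (hsign : ∀ i < m, 0 < (-1) ^ (m - i) * F.eval (p i)) :
    ∃ κ, Interlace m p κ ∧ F = rootProd (m + 1) κ := by
  obtain ⟨xp, hxp, hFxp⟩ := exists_gt_eval_pos hF (by omega) (p (m - 1))
  obtain ⟨xm, hxm, hFxm⟩ := exists_lt_neg_one_pow_mul_eval_pos hF (by omega) (min (p 0) xp)
  rw [hdeg] at hFxm
  -- the points `xm < p₀ < ⋯ < p_{m-1} < xp`
  set pts : ℕ → ℝ := fun i => if i = 0 then xm else if i ≤ m then p (i - 1) else xp
  have hpts : StrictMonoOn pts (Set.Iic (m + 1)) := strictMonoOn_Iic_of_lt_succ fun i hi => by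
    simp only [pts, Order.succ_eq_add_one, Nat.add_eq_zero_iff, one_ne_zero, and_false,
      if_false, Nat.add_sub_cancel]
    by_cases h0 : i = 0
    · subst h0
      rw [if_pos rfl]
      split_ifs
      · exact hxm.trans_le (min_le_left _ _)
      · exact hxm.trans_le (min_le_right _ _)
    · rw [if_neg h0, if_pos (by omega : i ≤ m)]
      split_ifs
      · exact hp (by simp; omega) (by simp; omega) (by omega)
      · obtain rfl : i = m := by omega
        exact hxp
  obtain ⟨κ, hκ, rfl⟩ := exists_eq_rootProd_of_alternating hF hdeg hpts fun i hi => by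
    rcases Nat.eq_zero_or_pos i with rfl | hi0
    · simpa [pts] using hFxm
    rcases hi.lt_or_eq with hi | rfl
    · have hpi : pts i = p (i - 1) := by simp [pts, show i ≠ 0 by omega, show i ≤ m by omega]
      rw [hpi, show m + 1 - i = m - (i - 1) by omega]
      exact hsign (i - 1) (by omega)
    · simpa [pts] using hFxp
  refine ⟨κ, fun i hi => ?_, rfl⟩
  have h1 := hκ i (by omega)
  have h2 := hκ (i + 1) (by omega)
  simp only [pts, show i + 1 ≠ 0 by omega, show i + 1 ≤ m by omega, if_false, if_true,
    Nat.add_sub_cancel] at h1 h2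
  exact ⟨h1.2, h2.1⟩

lemma Interlace.exists_recurrence (h : Interlace k μ ν) (a : ℝ) {b : ℝ} (hb : 0 < b) :
    ∃ κ, Interlace (k + 1) ν κ ∧
      (X - C a) * rootProd (k + 1) ν - C b * rootProd k μ = rootProd (k + 2) κ := by
  have hlead : ((X - C a) * rootProd (k + 1) ν).Monic := (monic_X_sub_C a).mul rootProd_monic
  have hdeg : ((X - C a) * rootProd (k + 1) ν).natDegree = k + 2 := by
    rw [natDegree_mul (X_sub_C_ne_zero a) rootProd_monic.ne_zero, natDegree_X_sub_C,
      natDegree_rootProd]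
    omega
  obtain ⟨hF, hFdeg⟩ := monic_sub_of_natDegree_lt hlead (G := C b * rootProd k μ)
    ((natDegree_C_mul_le _ _).trans_lt (by rw [natDegree_rootProd, hdeg]; omega))
  refine exists_interlace_of_alternating hF (hFdeg.trans hdeg) (h.strictMonoOn_right.mono
    fun i hi => by simp at hi ⊢; omega) fun i hi => ?_
  have hsgn := neg_one_pow_mul_eval_rootProd_pos (by omega) (h.right_mem_slot (i := i) (by omega))
  simp only [eval_sub, eval_mul, eval_C, eval_rootProd_self hi, mul_zero, zero_sub]
  rw [show k + 1 - i = k - i + 1 by omega, pow_succ]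
  nlinarith

lemma Interlace.exists_sub_C_mul (h : Interlace k μ ν) (t : ℝ) :
    ∃ L, Interlace k μ L ∧ rootProd (k + 1) ν - C t * rootProd k μ = rootProd (k + 1) L := by
  obtain ⟨hF, hFdeg⟩ := monic_sub_of_natDegree_lt (rootProd_monic (m := k + 1) (g := ν))
    (G := C t * rootProd k μ)
    ((natDegree_C_mul_le _ _).trans_lt (by simp [natDegree_rootProd]))
  refine exists_interlace_of_alternating hF (hFdeg.trans natDegree_rootProd)
    h.strictMonoOn_left fun i hi => ?_
  have hsgn := neg_one_pow_mul_eval_rootProd_pos (by omega) (h.left_mem_slot hi)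
  simp only [eval_sub, eval_mul, eval_C, eval_rootProd_self hi, mul_zero, sub_zero]
  rwa [show k + 1 - (i + 1) = k - i by omega] at hsgn

lemma Interlace.exists_eval_rootProd_eq_mul (h : Interlace k μ L) (hn : n ≤ k)
    (hx : x ∈ slot k μ n) :
    ∃ Q, 0 < (-1 : ℝ) ^ (k - n) * Q ∧ (rootProd (k + 1) L).eval x = (x - L n) * Q := by
  refine ⟨(∏ i ∈ Finset.range n, (x - L i)) * ∏ i ∈ Finset.Ico (n + 1) (k + 1), (x - L i),
    ?_, ?_⟩
  · have hlow : 0 < ∏ i ∈ Finset.range n, (x - L i) := Finset.prod_pos fun i hi =>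
      sub_pos.mpr ((h i (by simp at hi; omega)).1.trans (hx.1 i (Finset.mem_range.mp hi)))
    have hup := neg_one_pow_card_mul_prod_pos (g := fun i => x - L i)
      (s := Finset.Ico (n + 1) (k + 1)) fun i hi => by
        obtain ⟨hi1, hi2⟩ := Finset.mem_Ico.mp hi
        have hμL := (h (i - 1) (by omega)).2
        rw [Nat.sub_add_cancel (by omega)] at hμL
        exact sub_neg.mpr ((hx.2 (i - 1) (by omega) (by omega)).trans hμL)
    rw [Nat.card_Ico, show k + 1 - (n + 1) = k - n by omega] at hup
    rw [mul_left_comm]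
    exact mul_pos hlow hup
  · rw [eval_rootProd, ← Finset.prod_range_mul_prod_Ico _ (by omega : n + 1 ≤ k + 1),
      Finset.prod_range_succ]
    ring

namespace Interlace

noncomputable def pencilRoots (h : Interlace k μ ν) (t : ℝ) : ℕ → ℝ :=
  (h.exists_sub_C_mul t).choose

variable (h : Interlace k μ ν)

lemma interlace_pencilRoots (t : ℝ) : Interlace k μ (h.pencilRoots t) :=
  (h.exists_sub_C_mul t).choose_spec.1

lemma rootProd_pencilRoots (t : ℝ) :
    rootProd (k + 1) (h.pencilRoots t) = rootProd (k + 1) ν - C t * rootProd k μ :=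
  (h.exists_sub_C_mul t).choose_spec.2.symm

lemma eval_rootProd_pencilRoots (t x : ℝ) : (rootProd (k + 1) (h.pencilRoots t)).eval x =
    (rootProd (k + 1) ν).eval x - t * (rootProd k μ).eval x := by
  simp [rootProd_pencilRoots]

lemma strictMono_pencilRoots (hn : n ≤ k) : StrictMono fun t => h.pencilRoots t n := by
  intro s t hst
  set x := h.pencilRoots s n
  have hx := (h.interlace_pencilRoots s).right_mem_slot hn
  obtain ⟨Q, hQ, hQeq⟩ := (h.interlace_pencilRoots t).exists_eval_rootProd_eq_mul hn hx
  have hμ := neg_one_pow_mul_eval_rootProd_pos hn hx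
  have hroot := h.eval_rootProd_pencilRoots s x
  rw [eval_rootProd_self (by omega)] at hroot
  rw [h.eval_rootProd_pencilRoots] at hQeq
  have : (x - h.pencilRoots t n) * ((-1) ^ (k - n) * Q) =
      -(t - s) * ((-1) ^ (k - n) * (rootProd k μ).eval x) := by
    linear_combination -(-1) ^ (k - n) * (hroot + hQeq)
  show x < h.pencilRoots t n
  nlinarith [mul_pos (sub_pos.mpr hst) hμ]

lemma slot_subset_range_pencilRoots (hn : n ≤ k) :
    slot k μ n ⊆ Set.range fun t => h.pencilRoots t n := by
  intro x hx
  have hμ := neg_one_pow_mul_eval_rootProd_pos hn hx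
  have hμ0 : (rootProd k μ).eval x ≠ 0 := fun h0 => by simp [h0] at hμ
  set t := (rootProd (k + 1) ν).eval x / (rootProd k μ).eval x
  obtain ⟨Q, hQ, hQeq⟩ := (h.interlace_pencilRoots t).exists_eval_rootProd_eq_mul hn hx
  rw [h.eval_rootProd_pencilRoots, div_mul_cancel₀ _ hμ0, sub_self] at hQeq
  have hQ0 : Q ≠ 0 := fun h0 => by simp [h0] at hQ
  exact ⟨t, (sub_eq_zero.mp ((mul_eq_zero.mp hQeq.symm).resolve_right hQ0)).symm⟩

lemma continuous_pencilRoots (hn : n ≤ k) : Continuous fun t => h.pencilRoots t n := by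
  refine continuous_iff_continuousAt.mpr fun t => ?_
  refine ((h.strictMono_pencilRoots hn).strictMonoOn Set.univ).continuousAt_of_image_mem_nhds
    Filter.univ_mem ?_
  rw [Set.image_univ]
  exact Filter.mem_of_superset (isOpen_slot.mem_nhds
    ((h.interlace_pencilRoots t).right_mem_slot hn)) (h.slot_subset_range_pencilRoots hn)

end Interlace

end Interlacing

section SturmLiouville

variable (N : ℕ) (f q w : ℕ → ℝ) (β : ℝ)

/-- `slSolRev N f q w β (k + 1) = z_{N-k}`, where `z` solves the equation and the boundary
condition `cos β z_N - sin β f_N Δz_N = 0`, normalised by `z_N = sin β`. -/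
noncomputable def slSolRev : ℕ → ℝ[X]
  | 0 => C (sin β + cos β / f N)
  | 1 => C (sin β)
  | k + 2 =>
      C (f (N - k - 1))⁻¹ *
        ((C (f (N - k - 1) + f (N - k) + q (N - k)) - X * C (w (N - k))) * slSolRev (k + 1) -
          C (f (N - k)) * slSolRev k)

variable {N f q w β}

lemma slSolRev_succ_succ {k m : ℕ} (hk : N - k = m + 1) (hf : f m ≠ 0) :
    C (f m) * slSolRev N f q w β (k + 2) =
      (C (f m + f (m + 1) + q (m + 1)) - X * C (w (m + 1))) * slSolRev N f q w β (k + 1) -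
        C (f (m + 1)) * slSolRev N f q w β k := by
  rw [slSolRev, show N - k - 1 = m by omega, hk, ← mul_assoc, ← C_mul, mul_inv_cancel₀ hf, C_1,
    one_mul]

lemma slSol_succ_succ {y0 d0 : ℂ} {n : ℕ} (hf : f (n + 1) ≠ 0) :
    C (f (n + 1) : ℂ) * slSol f q w y0 d0 (n + 2) =
      C (f (n + 1) : ℂ) * slSol f q w y0 d0 (n + 1) +
        (C (f n : ℂ) * (slSol f q w y0 d0 (n + 1) - slSol f q w y0 d0 n) +
          C (q (n + 1) : ℂ) * slSol f q w y0 d0 (n + 1) -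
          X * C (w (n + 1) : ℂ) * slSol f q w y0 d0 (n + 1)) := by
  rw [slSol, mul_add, ← mul_assoc, ← C_mul, mul_inv_cancel₀ (by exact_mod_cast hf), C_1, one_mul]

variable (N f q w β) in
/-- The Wronskian `f_m (y_{m+1} z_m - y_m z_{m+1})` at `m = N - k` of `y = slSol f q w y0 d0`
and `z`. -/
noncomputable def slWronskian (y0 d0 : ℂ) (k : ℕ) : ℂ[X] :=
  C (f (N - k) : ℂ) *
    (slSol f q w y0 d0 (N - k + 1) * (slSolRev N f q w β (k + 1)).map (algebraMap ℝ ℂ) -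
      slSol f q w y0 d0 (N - k) * (slSolRev N f q w β k).map (algebraMap ℝ ℂ))

lemma slWronskian_succ {y0 d0 : ℂ} {k : ℕ} (hk : k < N) (hf : ∀ n ≤ N, f n ≠ 0) :
    slWronskian N f q w β y0 d0 (k + 1) = slWronskian N f q w β y0 d0 k := by
  obtain ⟨m, hm⟩ : ∃ m, N - k = m + 1 := ⟨N - k - 1, by omega⟩
  have hrev := congrArg (Polynomial.map (algebraMap ℝ ℂ))
    (slSolRev_succ_succ (q := q) (w := w) (β := β) hm (hf m (by omega)))
  simp only [Polynomial.map_mul, Polynomial.map_sub, Polynomial.map_add, Polynomial.map_C,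
    Polynomial.map_X, Complex.coe_algebraMap, C_add] at hrev
  have hsol := slSol_succ_succ (q := q) (w := w) (y0 := y0) (d0 := d0) (hf (m + 1) (by omega))
  rw [slWronskian, slWronskian, show N - (k + 1) = m by omega, hm]
  linear_combination slSol f q w y0 d0 (m + 1) * hrev -
    (slSolRev N f q w β (k + 1)).map (algebraMap ℝ ℂ) * hsol

lemma slWronskian_eq_slWronskian_zero (hf : ∀ n ≤ N, f n ≠ 0) (y0 d0 : ℂ) {k : ℕ} (hk : k ≤ N) :
    slWronskian N f q w β y0 d0 k = slWronskian N f q w β y0 d0 0 := by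
  induction k with
  | zero => rfl
  | succ k ih => rw [slWronskian_succ (by omega) hf, ih (by omega)]

/-- The boundary form at `N` of `y = slSol f q w y0 d0`, computed by transporting the Wronskian
with `z` from `N` down to `0`. -/
lemma slSol_boundary (hf : ∀ n ≤ N, f n ≠ 0) (y0 d0 : ℂ) :
    C (cos β : ℂ) * slSol f q w y0 d0 N -
        C ((sin β : ℂ) * f N) * (slSol f q w y0 d0 (N + 1) - slSol f q w y0 d0 N) =
      C (f 0 : ℂ) * (C y0 * (slSolRev N f q w β N).map (algebraMap ℝ ℂ) -
        slSol f q w y0 d0 1 * (slSolRev N f q w β (N + 1)).map (algebraMap ℝ ℂ)) := by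
  have hW := slWronskian_eq_slWronskian_zero (q := q) (w := w) (β := β) hf y0 d0 le_rfl
  simp only [slWronskian, Nat.sub_self, Nat.sub_zero, zero_add] at hW
  have hcos : C (f N : ℂ) * C ((cos β / f N : ℝ) : ℂ) = C (cos β : ℂ) := by
    rw [← C_mul]
    congr 1
    push_cast
    field_simp [show (f N : ℂ) ≠ 0 by exact_mod_cast hf N le_rfl]
  simp only [slSolRev, Polynomial.map_add, Polynomial.map_C, Complex.coe_algebraMap, C_add,
    show slSol f q w y0 d0 0 = C y0 from rfl] at hW
  rw [C_mul]
  linear_combination hW - slSol f q w y0 d0 N * hcos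

lemma slCharPoly_sep (hf : ∀ n ≤ N, f n ≠ 0) (α : ℝ) :
    slCharPoly N f q w (sepA α) (sepB β) =
      (C (-(cos α + f 0 * sin α)) * slSolRev N f q w β (N + 1) +
        C (f 0 * sin α) * slSolRev N f q w β N).map (algebraMap ℝ ℂ) := by
  have hφ := slSol_boundary (q := q) (w := w) (β := β) hf 1 0
  have hψ := slSol_boundary (q := q) (w := w) (β := β) hf 0 1
  have hf0 : C (f 0 : ℂ) * C (f 0 : ℂ)⁻¹ = 1 := by
    rw [← C_mul, mul_inv_cancel₀ (by exact_mod_cast hf 0 (Nat.zero_le N)), C_1]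
  simp only [show ∀ y0 d0, slSol f q w y0 d0 1 = C (y0 + d0 / (f 0 : ℂ)) from fun _ _ => rfl,
    zero_div, add_zero, zero_add, one_div, C_0, C_1, zero_mul, one_mul] at hφ hψ
  simp only [slCharPoly, sepA, sepB, Matrix.det_fin_two_of, Matrix.of_apply, Matrix.cons_val',
    Matrix.cons_val_zero, Matrix.cons_val_one, Matrix.empty_val', Matrix.cons_val_fin_one,
    Polynomial.map_add, Polynomial.map_mul, Polynomial.map_C, Complex.coe_algebraMap,
    C_neg, C_add, C_mul]
  norm_num
  simp only [Complex.ofReal_cos, Complex.ofReal_sin, C_mul] at hφ hψ ⊢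
  linear_combination C (Complex.sin α) * hφ + C (Complex.cos α) * hψ -
    C (Complex.cos α) * (slSolRev N f q w β (N + 1)).map (algebraMap ℝ ℂ) * hf0

lemma exists_slSolRev_eq_rootProd (hf : ∀ n ≤ N, f n ≠ 0) (hw : ∀ n, 1 ≤ n → n ≤ N → 0 < w n)
    (hβ : sin β ≠ 0) {k : ℕ} (hk : k < N) :
    ∃ μ ν c, Interlace k μ ν ∧ c ≠ 0 ∧ slSolRev N f q w β (k + 1) = C c * rootProd k μ ∧
      slSolRev N f q w β (k + 2) =
        C (-(w (N - k) / f (N - k - 1)) * c) * rootProd (k + 1) ν := by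
  induction k with
  | zero =>
    obtain ⟨m, rfl⟩ : ∃ m, N = m + 1 := ⟨N - 1, by omega⟩
    have hfm := hf m (by omega)
    have hfm1 := hf (m + 1) le_rfl
    have hwm1 := (hw (m + 1) (by omega) le_rfl).ne'
    refine ⟨0, fun _ => ((f m + f (m + 1) + q (m + 1)) * sin β - f (m + 1) * sin β - cos β) /
      (w (m + 1) * sin β), sin β, fun i hi => absurd hi i.not_lt_zero, hβ,
      by simp [slSolRev, rootProd], Polynomial.funext fun x => ?_⟩
    simp only [slSolRev, rootProd, zero_add, Finset.prod_range_one, Nat.sub_zero,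
      Nat.add_sub_cancel, eval_mul, eval_sub, eval_C, eval_X]
    field_simp
    ring
  | succ k ih =>
    obtain ⟨μ, ν, c, hI, hc, hμ, hν⟩ := ih (by omega)
    obtain ⟨p, hp⟩ : ∃ p, N - k = p + 2 := ⟨N - k - 2, by omega⟩
    have hfp := hf p (by omega)
    have hfp1 := hf (p + 1) (by omega)
    have hwp1 := hw (p + 1) (by omega) (by omega)
    have hwp2 := hw (p + 2) (by omega) (by omega)
    obtain ⟨κ, hκ, hκeq⟩ := hI.exists_recurrence ((f p + f (p + 1) + q (p + 1)) / w (p + 1))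
      (b := f (p + 1) ^ 2 / (w (p + 1) * w (p + 2))) (by positivity)
    refine ⟨ν, κ, -(w (p + 2) / f (p + 1)) * c, hκ,
      mul_ne_zero (neg_ne_zero.mpr (div_ne_zero hwp2.ne' hfp1)) hc,
      by rw [hν, show N - k - 1 = p + 1 by omega, hp], Polynomial.funext fun x => ?_⟩
    rw [← hκeq, show N - (k + 1) = p + 1 by omega, show p + 1 - 1 = p from rfl]
    have hrec := congrArg (eval x) (slSolRev_succ_succ (q := q) (w := w) (β := β)
      (show N - (k + 1) = p + 1 by omega) hfp)
    rw [hμ, hν, show N - k - 1 = p + 1 by omega, hp] at hrec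
    simp only [eval_mul, eval_sub, eval_C, eval_X] at hrec ⊢
    rw [← mul_right_inj' hfp, hrec]
    field_simp
    ring

end SturmLiouville

section PencilParam

variable {a c ξ α : ℝ}

lemma sin_mul_cos_add_mul_sin (hξ : cos ξ + c * sin ξ = 0) :
    sin ξ * (cos α + c * sin α) = sin (ξ - α) := by
  rw [sin_sub]
  linear_combination sin α * hξ

lemma cos_add_mul_sin_pos (hξ : ξ ∈ Set.Ioo 0 π) (hξeq : cos ξ + c * sin ξ = 0)
    (hα : α ∈ Set.Ico 0 ξ) : 0 < cos α + c * sin α := by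
  refine pos_of_mul_pos_right ?_ (sin_pos_of_pos_of_lt_pi hξ.1 hξ.2).le
  rw [sin_mul_cos_add_mul_sin hξeq]
  exact sin_pos_of_pos_of_lt_pi (by linarith [hα.2]) (by linarith [hα.1, hξ.2])

lemma cos_add_mul_sin_neg (hξ : ξ ∈ Set.Ioo 0 π) (hξeq : cos ξ + c * sin ξ = 0)
    (hα : α ∈ Set.Ioo ξ π) : cos α + c * sin α < 0 := by
  refine neg_of_mul_neg_right ?_ (sin_pos_of_pos_of_lt_pi hξ.1 hξ.2).le
  rw [sin_mul_cos_add_mul_sin hξeq]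
  exact sin_neg_of_neg_of_neg_pi_lt (by linarith [hα.1]) (by linarith [hα.2, hξ.1])

noncomputable def pencilParam (a c α : ℝ) : ℝ := a * sin α / (cos α + c * sin α)

lemma strictAntiOn_pencilParam {S : Set ℝ} (ha : a < 0)
    (hlen : ∀ s ∈ S, ∀ t ∈ S, t - s < π)
    (hsign : ∀ s ∈ S, ∀ t ∈ S, 0 < (cos s + c * sin s) * (cos t + c * sin t)) :
    StrictAntiOn (pencilParam a c) S := by
  intro s hs t ht hst
  have hD := hsign s hs t ht
  have hsub : pencilParam a c t - pencilParam a c s =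
      a * sin (t - s) / ((cos s + c * sin s) * (cos t + c * sin t)) := by
    rw [pencilParam, pencilParam, div_sub_div _ _ (right_ne_zero_of_mul hD.ne')
      (left_ne_zero_of_mul hD.ne'), sin_sub, mul_comm (cos t + _)]
    ring
  have : a * sin (t - s) / ((cos s + c * sin s) * (cos t + c * sin t)) < 0 :=
    div_neg_of_neg_of_pos (mul_neg_of_neg_of_pos ha
      (sin_pos_of_pos_of_lt_pi (by linarith) (hlen s hs t ht))) hD
  linarith

lemma strictAntiOn_pencilParam_Ico (ha : a < 0) (hξ : ξ ∈ Set.Ioo 0 π)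
    (hξeq : cos ξ + c * sin ξ = 0) : StrictAntiOn (pencilParam a c) (Set.Ico 0 ξ) :=
  strictAntiOn_pencilParam ha (fun s hs t ht => by linarith [hs.1, ht.2, hξ.2])
    fun s hs t ht => mul_pos (cos_add_mul_sin_pos hξ hξeq hs) (cos_add_mul_sin_pos hξ hξeq ht)

lemma strictAntiOn_pencilParam_Ioo (ha : a < 0) (hξ : ξ ∈ Set.Ioo 0 π)
    (hξeq : cos ξ + c * sin ξ = 0) : StrictAntiOn (pencilParam a c) (Set.Ioo ξ π) :=
  strictAntiOn_pencilParam ha (fun s hs t ht => by linarith [hs.1, ht.2, hξ.1])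
    fun s hs t ht => mul_pos_of_neg_of_neg (cos_add_mul_sin_neg hξ hξeq hs)
      (cos_add_mul_sin_neg hξ hξeq ht)

lemma continuousAt_pencilParam_pi : ContinuousAt (pencilParam a c) π :=
  ContinuousAt.div (by fun_prop) (by fun_prop) (by simp)

lemma pencilParam_pi : pencilParam a c π = pencilParam a c 0 := by
  simp [pencilParam]

end PencilParam

lemma nthEig_C_mul_map_rootProd {m n : ℕ} {L : ℕ → ℝ} {e : ℂ} (he : e ≠ 0)
    (hL : StrictMonoOn L (Set.Iio m)) (hn : n < m) :
    nthEig (C e * (rootProd m L).map (algebraMap ℝ ℂ)) n = L n := by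
  have hroots : (C e * (rootProd m L).map (algebraMap ℝ ℂ)).roots =
      (Multiset.range m).map fun i => (L i : ℂ) := by
    rw [roots_C_mul _ he, rootProd_eq_multiset_prod, Polynomial.map_multiset_prod,
      ← roots_multiset_prod_X_sub_C ((Multiset.range m).map fun i => (L i : ℂ))]
    simp [Multiset.map_map]
  have hsorted : ((List.range m).map L).Pairwise (· ≤ ·) := by
    rw [List.pairwise_map, List.pairwise_iff_getElem]
    intro i j hi hj hij
    simp only [List.length_range] at hi hj
    simpa using (hL (by simpa using hi) (by simpa using hj) hij).le
  have heig : eigList (C e * (rootProd m L).map (algebraMap ℝ ℂ)) = (List.range m).map L := by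
    rw [eigList, hroots, Multiset.filter_eq_self.mpr (by simp), Multiset.map_map,
      show Multiset.range m = ↑(List.range m) from rfl, Multiset.map_coe, Multiset.coe_sort]
    simpa [Function.comp_def] using List.mergeSort_eq_self _ hsorted
  rw [nthEig, heig, List.getD_eq_getElem _ _ (by simpa using hn)]
  simp

lemma nthEig_sep_eq_pencilRoots {k n : ℕ} {f q w : ℕ → ℝ} {β c α : ℝ} {μ ν : ℕ → ℝ}
    (hf : ∀ n ≤ k + 1, f n ≠ 0) (hw1 : w 1 ≠ 0) (hI : Interlace k μ ν) (hc : c ≠ 0)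
    (hμ : slSolRev (k + 1) f q w β (k + 1) = C c * rootProd k μ)
    (hν : slSolRev (k + 1) f q w β (k + 2) = C (-(w 1 / f 0) * c) * rootProd (k + 1) ν)
    (hα : cos α + f 0 * sin α ≠ 0) (hn : n ≤ k) :
    nthEig (slCharPoly (k + 1) f q w (sepA α) (sepB β)) n =
      hI.pencilRoots (pencilParam (-(f 0 ^ 2 / w 1)) (f 0) α) n := by
  have hf0 := hf 0 (Nat.zero_le _)
  have hpencil : C (-(cos α + f 0 * sin α)) * (C (-(w 1 / f 0) * c) * rootProd (k + 1) ν) +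
      C (f 0 * sin α) * (C c * rootProd k μ) =
      C ((cos α + f 0 * sin α) * (w 1 / f 0) * c) *
        rootProd (k + 1) (hI.pencilRoots (pencilParam (-(f 0 ^ 2 / w 1)) (f 0) α)) := by
    refine Polynomial.funext fun x => ?_
    simp only [hI.eval_rootProd_pencilRoots, pencilParam, eval_add, eval_mul, eval_C]
    field_simp
    ring
  rw [slCharPoly_sep hf, hμ, hν, hpencil, Polynomial.map_mul, Polynomial.map_C]
  refine nthEig_C_mul_map_rootProd
    ((_root_.map_ne_zero _).mpr (mul_ne_zero (mul_ne_zero hα (div_ne_zero hw1 hf0)) hc))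
    ((hI.interlace_pencilRoots _).strictMonoOn_right.mono fun i hi => ?_) (by omega)
  simp only [Set.mem_Iio, Set.mem_Iic] at hi ⊢
  omega

end DiscreteSL

open DiscreteSL in
theorem separated_nthEig_monotone_general (N : ℕ) (f q w : ℕ → ℝ)
    (hf : ∀ n ≤ N, f n ≠ 0) (hw : ∀ n, 1 ≤ n → n ≤ N → 0 < w n)
    (β0 : ℝ) (hβ0 : β0 ∈ Set.Ioo 0 Real.pi)
    (ξ : ℝ) (hξ : ξ ∈ Set.Ioo 0 Real.pi)
    (hξeq : Real.cos ξ + f 0 * Real.sin ξ = 0)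
    (n : ℕ) (hn : n < N) :
    StrictAntiOn (fun α => nthEig (slCharPoly N f q w (sepA α) (sepB β0)) n)
      (Set.Ico 0 ξ) ∧
    StrictAntiOn (fun α => nthEig (slCharPoly N f q w (sepA α) (sepB β0)) n)
      (Set.Ioo ξ Real.pi) ∧
    Tendsto (fun α => nthEig (slCharPoly N f q w (sepA α) (sepB β0)) n)
      (nhdsWithin Real.pi (Set.Iio Real.pi))
      (nhds (nthEig (slCharPoly N f q w (sepA 0) (sepB β0)) n)) := by
  obtain ⟨k, rfl⟩ : ∃ k, N = k + 1 := ⟨N - 1, by omega⟩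
  have hw1 := hw 1 le_rfl (by omega)
  obtain ⟨μ, ν, c, hI, hc, hμ, hν⟩ := exists_slSolRev_eq_rootProd (q := q) hf hw
    (sin_pos_of_pos_of_lt_pi hβ0.1 hβ0.2).ne' (k := k) (by omega)
  rw [show k + 1 - k = 1 by omega, Nat.sub_self] at hν
  have ha : -(f 0 ^ 2 / w 1) < 0 := neg_neg_of_pos (by positivity [hf 0 (Nat.zero_le _)])
  have key : ∀ α, cos α + f 0 * sin α ≠ 0 →
      nthEig (slCharPoly (k + 1) f q w (sepA α) (sepB β0)) n =
        hI.pencilRoots (pencilParam (-(f 0 ^ 2 / w 1)) (f 0) α) n := fun α hα =>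
    nthEig_sep_eq_pencilRoots hf hw1.ne' hI hc hμ hν hα (by omega)
  have hmono := hI.strictMono_pencilRoots (n := n) (by omega)
  refine ⟨?_, ?_, ?_⟩
  · exact (hmono.comp_strictAntiOn (strictAntiOn_pencilParam_Ico ha hξ hξeq)).congr
      fun α hα => (key α (cos_add_mul_sin_pos hξ hξeq hα).ne').symm
  · exact (hmono.comp_strictAntiOn (strictAntiOn_pencilParam_Ioo ha hξ hξeq)).congr
      fun α hα => (key α (cos_add_mul_sin_neg hξ hξeq hα).ne).symm
  · rw [key 0 (by simp), ← pencilParam_pi]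
    refine (((hI.continuous_pencilRoots (by omega)).continuousAt.comp
      continuousAt_pencilParam_pi).tendsto.mono_left nhdsWithin_le_nhds).congr' ?_
    filter_upwards [Ioo_mem_nhdsLT hξ.2] with α hα
    exact (key α (cos_add_mul_sin_neg hξ hξeq hα).ne).symm

/-- For fixed equation data and fixed `β₀ ∈ (0,π)`, each `n`-th eigenvalue function
`α ↦ λₙ(S_{α,β₀})` is strictly decreasing on `[0,ξ)` and on `(ξ,π)`, where `ξ` is the
unique angle in `(0,π)` with `cos ξ + f₀ sin ξ = 0`, and satisfies
`lim_{α→π⁻} λₙ(α) = λₙ(0)` for all `0 ≤ n ≤ N-1`. -/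
theorem separated_nthEig_monotone (N : ℕ) (hN : 2 ≤ N) (f q w : ℕ → ℝ)
    (hf : ∀ n ≤ N, f n ≠ 0) (hw : ∀ n, 1 ≤ n → n ≤ N → 0 < w n)
    (β0 : ℝ) (hβ0 : β0 ∈ Set.Ioo 0 Real.pi)
    (ξ : ℝ) (hξ : ξ ∈ Set.Ioo 0 Real.pi)
    (hξeq : Real.cos ξ + f 0 * Real.sin ξ = 0)
    (n : ℕ) (hn : n < N) :
    StrictAntiOn (fun α => nthEig (slCharPoly N f q w (sepA α) (sepB β0)) n)
      (Set.Ico 0 ξ) ∧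
    StrictAntiOn (fun α => nthEig (slCharPoly N f q w (sepA α) (sepB β0)) n)
      (Set.Ioo ξ Real.pi) ∧
    Tendsto (fun α => nthEig (slCharPoly N f q w (sepA α) (sepB β0)) n)
      (nhdsWithin Real.pi (Set.Iio Real.pi))
      (nhds (nthEig (slCharPoly N f q w (sepA 0) (sepB β0)) n)) :=
  separated_nthEig_monotone_general N f q w hf hw β0 hβ0 ξ hξ hξeq n hn
end

section
/- For N=2, f≡1, q≡0, w≡1 and boundary condition S_{α,β}: cos α·y_0 - sin α·Δy_0 = 0, cos β·y_2 - sin β·Δy_2 = 0, with β∈(0,π) fixed, both eigenvalue functions λ_0(α)≤λ_1(α) (the ordered roots of the characteristic quadratic) are strictly decreasing in α on [0,3π/4) and on (3π/4,π). -/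
open Real

/-- Eigenvalue predicate for the problem `N = 2`, `f ≡ 1`, `q ≡ 0`, `w ≡ 1` with
separated boundary condition `S_{α,β}`:
`cos α · y₀ - sin α · Δy₀ = 0`, `cos β · y₂ - sin β · Δy₂ = 0`. -/
def IsEigenvalueSep (α β lam : ℝ) : Prop :=
  ∃ y : ℕ → ℝ,
    ¬ (y 0 = 0 ∧ y 1 = 0 ∧ y 2 = 0 ∧ y 3 = 0) ∧
    (∀ n, 1 ≤ n → n ≤ 2 → -((y (n + 1) - y n) - (y n - y (n - 1))) = lam * y n) ∧
    Real.cos α * y 0 - Real.sin α * (y 1 - y 0) = 0 ∧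
    Real.cos β * y 2 - Real.sin β * (y 3 - y 2) = 0


noncomputable def FF0 (b l : ℝ) : ℝ := Real.sin b - Real.cos b - Real.sin b * l
noncomputable def FF1 (b l : ℝ) : ℝ :=
  (Real.cos b - Real.sin b + Real.sin b * l) * (2 - l) + Real.sin b
noncomputable def PP (b a l : ℝ) : ℝ :=
  Real.sin a * FF0 b l + (Real.sin a + Real.cos a) * FF1 b l
noncomputable def QQ (b a l : ℝ) : ℝ :=
  Real.cos a * (FF0 b l + FF1 b l) - Real.sin a * FF1 b l
noncomputable def dPP (b a l : ℝ) : ℝ :=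
  Real.sin a * (-Real.sin b) +
    (Real.sin a + Real.cos a) *
      (Real.sin b * (2 - l) - (Real.cos b - Real.sin b + Real.sin b * l))
noncomputable def aa (b a : ℝ) : ℝ := -(Real.sin b) * (Real.sin a + Real.cos a)
noncomputable def bb (b a : ℝ) : ℝ :=
  2 * Real.sin b * (Real.sin a + Real.cos a) + Real.sin b * Real.cos a
    - Real.cos b * (Real.sin a + Real.cos a)
noncomputable def cc (b a : ℝ) : ℝ :=
  Real.cos b * (Real.sin a + Real.cos a) + Real.cos b * Real.cos a - Real.sin b * Real.cos a

lemma PP_quad (b a l : ℝ) : PP b a l = aa b a * l ^ 2 + bb b a * l + cc b a := by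
  simp only [PP, FF0, FF1, aa, bb, cc]; ring

lemma dPP_eq (b a l : ℝ) : dPP b a l = 2 * aa b a * l + bb b a := by
  simp only [dPP, aa, bb]; ring

lemma disc_eq (b a : ℝ) :
    bb b a ^ 2 - 4 * aa b a * cc b a =
      (Real.sin b * Real.cos a + Real.cos b * (Real.sin a + Real.cos a)) ^ 2
        + 4 * Real.sin b ^ 2 * (Real.sin a + Real.cos a) ^ 2 := by
  simp only [aa, bb, cc]; ring

lemma PP_rot (b a1 a2 l : ℝ) :
    PP b a2 l = (Real.sin a2 * Real.cos a1 - Real.cos a2 * Real.sin a1) * QQ b a1 l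
      + (Real.sin a2 * Real.sin a1 + Real.cos a2 * Real.cos a1) * PP b a1 l := by
  simp only [PP, QQ]
  linear_combination (-(Real.sin a2 * (FF0 b l + FF1 b l) + Real.cos a2 * FF1 b l)) *
    (Real.sin_sq_add_cos_sq a1)

lemma QQ_dPP (b a l : ℝ) (h : PP b a l = 0) :
    QQ b a l * dPP b a l = (Real.sin b * (l - 1) + Real.cos b) ^ 2 + Real.sin b ^ 2 := by
  simp only [PP, QQ, dPP, FF0, FF1] at *
  linear_combination
    (((-2) * Real.sin b * (l - 1) - Real.cos b) * Real.cos a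
      - ((-2) * Real.sin b * (l - 1) + Real.sin b - Real.cos b) * Real.sin a) * h
    + ((Real.sin b * (l - 1) + Real.cos b) ^ 2 + Real.sin b ^ 2) * (Real.sin_sq_add_cos_sq a)


lemma eig_iff (b a l : ℝ) : IsEigenvalueSep a b l ↔ PP b a l = 0 := by
  constructor
  · rintro ⟨y, hnt, hrec, hb1, hb2⟩
    have e1 := hrec 1 le_rfl one_le_two
    have e2 := hrec 2 one_le_two le_rfl
    norm_num at e1 e2
    have hy2 : y 2 = (2 - l) * y 1 - y 0 := by linarith
    have hy3 : y 3 = (2 - l) * y 2 - y 1 := by linarith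
    have hE : FF0 b l * y 0 + FF1 b l * y 1 = 0 := by
      simp only [FF0, FF1]
      linear_combination hb2 + (Real.sin b - Real.cos b - Real.sin b * l) * hy2
        + Real.sin b * hy3
    have k0 : PP b a l * y 0 = 0 := by
      simp only [PP]
      linear_combination Real.sin a * hE + FF1 b l * hb1
    have k1 : PP b a l * y 1 = 0 := by
      simp only [PP]
      linear_combination (Real.sin a + Real.cos a) * hE - FF0 b l * hb1
    by_cases h0 : y 0 = 0
    · by_cases h1 : y 1 = 0
      · exfalso
        exact hnt ⟨h0, h1, by rw [hy2, h0, h1]; ring, by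
          rw [hy3, hy2, h0, h1]; ring⟩
      · exact (mul_eq_zero.1 k1).resolve_right h1
    · exact (mul_eq_zero.1 k0).resolve_right h0
  · intro hP
    refine ⟨fun n => if n = 0 then Real.sin a else if n = 1 then Real.sin a + Real.cos a
      else if n = 2 then (2 - l) * (Real.sin a + Real.cos a) - Real.sin a
      else if n = 3 then (2 - l) * ((2 - l) * (Real.sin a + Real.cos a) - Real.sin a)
        - (Real.sin a + Real.cos a) else 0, ?_, ?_, ?_, ?_⟩
    · rintro ⟨h0, h1, -, -⟩
      norm_num at h0 h1
      nlinarith [Real.sin_sq_add_cos_sq a]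
    · intro n hn1 hn2
      interval_cases n <;> norm_num <;> ring
    · norm_num; ring
    · norm_num
      simp only [PP, FF0, FF1] at hP
      linear_combination hP

lemma key (b : ℝ) (hσ : 0 < Real.sin b) (lam0 lam1 : ℝ → ℝ)
    (hchar : ∀ α ∈ Set.Ico 0 Real.pi, α ≠ 3 * Real.pi / 4 →
      lam0 α ≤ lam1 α ∧ {l : ℝ | IsEigenvalueSep α b l} = {lam0 α, lam1 α})
    (α : ℝ) (hα : α ∈ Set.Ico 0 Real.pi) (hne : α ≠ 3 * Real.pi / 4)
    (hu : Real.sin α + Real.cos α ≠ 0) :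
    lam0 α < lam1 α ∧
      bb b α + aa b α * (lam0 α + lam1 α) = 0 ∧
      cc b α = aa b α * (lam0 α * lam1 α) := by
  obtain ⟨hle, hset⟩ := hchar α hα hne
  have ha : aa b α ≠ 0 := by
    simp only [aa]
    exact mul_ne_zero (neg_ne_zero.mpr hσ.ne') hu
  have h0 : PP b α (lam0 α) = 0 := by
    have : lam0 α ∈ {l : ℝ | IsEigenvalueSep α b l} := by
      rw [hset]; exact Set.mem_insert _ _
    exact (eig_iff b α (lam0 α)).1 this
  have h1 : PP b α (lam1 α) = 0 := by
    have : lam1 α ∈ {l : ℝ | IsEigenvalueSep α b l} := by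
      rw [hset]; exact Set.mem_insert_of_mem _ rfl
    exact (eig_iff b α (lam1 α)).1 this
  have q0 : aa b α * lam0 α ^ 2 + bb b α * lam0 α + cc b α = 0 := by
    rw [← PP_quad]; exact h0
  have q1 : aa b α * lam1 α ^ 2 + bb b α * lam1 α + cc b α = 0 := by
    rw [← PP_quad]; exact h1
  have hD : 0 < bb b α ^ 2 - 4 * aa b α * cc b α := by
    rw [disc_eq]
    have hu2 : 0 < (Real.sin α + Real.cos α) ^ 2 :=
      lt_of_le_of_ne (sq_nonneg _) (Ne.symm (pow_ne_zero 2 hu))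
    nlinarith [sq_nonneg (Real.sin b * Real.cos α + Real.cos b * (Real.sin α + Real.cos α)),
      mul_pos hσ hσ]
  have hlt : lam0 α < lam1 α := by
    rcases eq_or_lt_of_le hle with heq | hlt
    · exfalso
      set X := -(bb b α) / aa b α - lam0 α with hXdef
      have hv : aa b α * X + bb b α + aa b α * lam0 α = 0 := by
        rw [hXdef]; field_simp; ring
      have hEX : aa b α * (aa b α * X ^ 2 + bb b α * X + cc b α) = 0 := by
        linear_combination (aa b α * X - aa b α * lam0 α) * hv + aa b α * q0
      have hqX : aa b α * X ^ 2 + bb b α * X + cc b α = 0 :=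
        (mul_eq_zero.1 hEX).resolve_left ha
      have hPX : PP b α X = 0 := by rw [PP_quad]; exact hqX
      have hXmem : X ∈ {l : ℝ | IsEigenvalueSep α b l} := (eig_iff b α X).2 hPX
      rw [hset] at hXmem
      have hXeq : X = lam0 α := by
        rcases hXmem with h | h
        · exact h
        · rw [← heq] at h; exact h
      rw [hXeq] at hv
      have hcc : cc b α = aa b α * lam0 α ^ 2 := by
        linear_combination q0 - lam0 α * hv
      have hzero : bb b α ^ 2 - 4 * aa b α * cc b α = 0 := by
        linear_combination (bb b α - 2 * aa b α * lam0 α) * hv - 4 * aa b α * hcc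
      linarith
    · exact hlt
  refine ⟨hlt, ?_, ?_⟩
  · have hfac : (lam0 α - lam1 α) * (bb b α + aa b α * (lam0 α + lam1 α)) = 0 := by
      linear_combination q0 - q1
    rcases mul_eq_zero.1 hfac with h | h
    · exact absurd (by linarith : lam0 α = lam1 α) hlt.ne
    · exact h
  · have hbv : bb b α + aa b α * (lam0 α + lam1 α) = 0 := by
      have hfac : (lam0 α - lam1 α) * (bb b α + aa b α * (lam0 α + lam1 α)) = 0 := by
        linear_combination q0 - q1
      rcases mul_eq_zero.1 hfac with h | h
      · exact absurd (by linarith : lam0 α = lam1 α) hlt.ne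
      · exact h
    linear_combination q0 - lam0 α * hbv

set_option maxHeartbeats 1000000 in
lemma step (b : ℝ) (hσ : 0 < Real.sin b) (lam0 lam1 : ℝ → ℝ)
    (hchar : ∀ α ∈ Set.Ico 0 Real.pi, α ≠ 3 * Real.pi / 4 →
      lam0 α ≤ lam1 α ∧ {l : ℝ | IsEigenvalueSep α b l} = {lam0 α, lam1 α})
    (α1 α2 : ℝ) (hα1 : α1 ∈ Set.Ico 0 Real.pi) (hα2 : α2 ∈ Set.Ico 0 Real.pi)
    (h12 : α1 < α2) (hne1 : α1 ≠ 3 * Real.pi / 4) (hne2 : α2 ≠ 3 * Real.pi / 4)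
    (hsame : 0 < (Real.sin α1 + Real.cos α1) * (Real.sin α2 + Real.cos α2)) :
    lam0 α2 < lam0 α1 ∧ lam1 α2 < lam1 α1 := by
  have hu1 : Real.sin α1 + Real.cos α1 ≠ 0 := by
    intro h; rw [h] at hsame; simp at hsame
  have hu2 : Real.sin α2 + Real.cos α2 ≠ 0 := by
    intro h; rw [h] at hsame; simp at hsame
  obtain ⟨hlt1, hb1, hc1⟩ := key b hσ lam0 lam1 hchar α1 hα1 hne1 hu1
  obtain ⟨hlt2, hb2, hc2⟩ := key b hσ lam0 lam1 hchar α2 hα2 hne2 hu2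
  set l0 := lam0 α1 with hl0
  set l1 := lam1 α1 with hl1
  set m0 := lam0 α2 with hm0
  set m1 := lam1 α2 with hm1
  -- roots of P at α1
  have hp10 : PP b α1 l0 = 0 := by
    rw [PP_quad]; linear_combination l0 * hb1 + hc1
  have hp11 : PP b α1 l1 = 0 := by
    rw [PP_quad]; linear_combination l1 * hb1 + hc1
  -- sign of a1 * a2
  have ha12 : 0 < aa b α1 * aa b α2 := by
    have e : aa b α1 * aa b α2 = Real.sin b ^ 2
        * ((Real.sin α1 + Real.cos α1) * (Real.sin α2 + Real.cos α2)) := by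
      simp only [aa]; ring
    rw [e]; exact mul_pos (pow_pos hσ 2) hsame
  -- positivity of sin (α2 - α1)
  have hsd : 0 < Real.sin α2 * Real.cos α1 - Real.cos α2 * Real.sin α1 := by
    have h := Real.sin_pos_of_pos_of_lt_pi (x := α2 - α1) (by linarith)
      (by linarith [hα1.1, hα2.2])
    rw [Real.sin_sub] at h; linarith
  -- Wronskian positivity at the two roots
  have hW0 := QQ_dPP b α1 l0 hp10
  have hW1 := QQ_dPP b α1 l1 hp11
  have hWpos0 : 0 < (Real.sin b * (l0 - 1) + Real.cos b) ^ 2 + Real.sin b ^ 2 := by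
    nlinarith [sq_nonneg (Real.sin b * (l0 - 1) + Real.cos b), mul_pos hσ hσ]
  have hWpos1 : 0 < (Real.sin b * (l1 - 1) + Real.cos b) ^ 2 + Real.sin b ^ 2 := by
    nlinarith [sq_nonneg (Real.sin b * (l1 - 1) + Real.cos b), mul_pos hσ hσ]
  have hdp0 : dPP b α1 l0 = aa b α1 * (l0 - l1) := by
    rw [dPP_eq]; linear_combination hb1
  have hdp1 : dPP b α1 l1 = aa b α1 * (l1 - l0) := by
    rw [dPP_eq]; linear_combination hb1
  rw [hdp0] at hW0
  rw [hdp1] at hW1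
  have hq0 : QQ b α1 l0 * aa b α1 < 0 := by
    by_contra h
    push_neg at h
    have h2 : QQ b α1 l0 * aa b α1 * (l0 - l1) ≤ 0 :=
      mul_nonpos_of_nonneg_of_nonpos h (by linarith)
    linarith [hW0, hWpos0, h2]
  have hq1 : 0 < QQ b α1 l1 * aa b α1 := by
    by_contra h
    push_neg at h
    have h2 : QQ b α1 l1 * aa b α1 * (l1 - l0) ≤ 0 :=
      mul_nonpos_of_nonpos_of_nonneg h (by linarith)
    linarith [hW1, hWpos1, h2]
  -- value of P at α2 at the old roots
  have hr0 : PP b α2 l0 = (Real.sin α2 * Real.cos α1 - Real.cos α2 * Real.sin α1)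
      * QQ b α1 l0 := by
    have := PP_rot b α1 α2 l0
    rw [hp10] at this; linarith [this]
  have hr1 : PP b α2 l1 = (Real.sin α2 * Real.cos α1 - Real.cos α2 * Real.sin α1)
      * QQ b α1 l1 := by
    have := PP_rot b α1 α2 l1
    rw [hp11] at this; linarith [this]
  -- factored form of P at α2
  have hfac : ∀ x : ℝ, PP b α2 x = aa b α2 * ((x - m0) * (x - m1)) := by
    intro x
    rw [PP_quad]; linear_combination x * hb2 + hc2
  -- main sign computation at l0
  have hX0 : aa b α1 * aa b α2 * ((l0 - m0) * (l0 - m1)) < 0 := by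
    have e : aa b α1 * (aa b α2 * ((l0 - m0) * (l0 - m1)))
        = (Real.sin α2 * Real.cos α1 - Real.cos α2 * Real.sin α1) * (QQ b α1 l0 * aa b α1) := by
      rw [← hfac l0, hr0]; ring
    linarith [mul_neg_of_pos_of_neg hsd hq0, e]
  have hX0' : (l0 - m0) * (l0 - m1) < 0 := by
    by_contra h
    push_neg at h
    linarith [mul_nonneg ha12.le h, hX0]
  have hm0l0 : m0 < l0 := by
    by_contra h
    push_neg at h
    have : 0 ≤ (l0 - m0) * (l0 - m1) := by
      have h1 : l0 - m0 ≤ 0 := by linarith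
      have h2 : l0 - m1 ≤ 0 := by linarith
      nlinarith [mul_nonneg (neg_nonneg.2 h1) (neg_nonneg.2 h2)]
    linarith
  have hl0m1 : l0 < m1 := by
    by_contra h
    push_neg at h
    have : 0 ≤ (l0 - m0) * (l0 - m1) :=
      mul_nonneg (by linarith) (by linarith)
    linarith
  -- main sign computation at l1
  have hX1 : 0 < aa b α1 * aa b α2 * ((l1 - m0) * (l1 - m1)) := by
    have e : aa b α1 * (aa b α2 * ((l1 - m0) * (l1 - m1)))
        = (Real.sin α2 * Real.cos α1 - Real.cos α2 * Real.sin α1) * (QQ b α1 l1 * aa b α1) := by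
      rw [← hfac l1, hr1]; ring
    linarith [mul_pos hsd hq1, e]
  have hX1' : 0 < (l1 - m0) * (l1 - m1) := by
    by_contra h
    push_neg at h
    linarith [mul_nonpos_of_nonneg_of_nonpos ha12.le h, hX1]
  have hm1l1 : m1 < l1 := by
    by_contra h
    push_neg at h
    have : (l1 - m0) * (l1 - m1) ≤ 0 :=
      mul_nonpos_of_nonneg_of_nonpos (by linarith) (by linarith)
    linarith
  exact ⟨hm0l0, hm1l1⟩

lemma u_pos {α : ℝ} (h0 : 0 ≤ α) (h1 : α < 3 * Real.pi / 4) :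
    0 < Real.sin α + Real.cos α := by
  have hπ := Real.pi_pos
  have hs : 0 < Real.sin (α + Real.pi / 4) :=
    Real.sin_pos_of_pos_of_lt_pi (by linarith) (by linarith)
  have e : Real.sin (α + Real.pi / 4)
      = (Real.sin α + Real.cos α) * (Real.sqrt 2 / 2) := by
    rw [Real.sin_add, Real.sin_pi_div_four, Real.cos_pi_div_four]; ring
  have h2 : (0 : ℝ) < Real.sqrt 2 / 2 := by positivity
  nlinarith [hs, e, h2]

lemma u_neg {α : ℝ} (h0 : 3 * Real.pi / 4 < α) (h1 : α < Real.pi) :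
    Real.sin α + Real.cos α < 0 := by
  have hπ := Real.pi_pos
  have hs : 0 < Real.sin (α - 3 * Real.pi / 4) :=
    Real.sin_pos_of_pos_of_lt_pi (by linarith) (by linarith)
  have e : Real.sin (α + Real.pi / 4) = -Real.sin (α - 3 * Real.pi / 4) := by
    rw [show α + Real.pi / 4 = (α - 3 * Real.pi / 4) + Real.pi by ring, Real.sin_add_pi]
  have e2 : Real.sin (α + Real.pi / 4)
      = (Real.sin α + Real.cos α) * (Real.sqrt 2 / 2) := by
    rw [Real.sin_add, Real.sin_pi_div_four, Real.cos_pi_div_four]; ring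
  have h2 : (0 : ℝ) < Real.sqrt 2 / 2 := by positivity
  nlinarith [hs, e, e2, h2]


/-- For `N = 2`, `f ≡ 1`, `q ≡ 0`, `w ≡ 1` and `S_{α,β}` with `β₀ ∈ (0,π)` fixed, both
eigenvalue functions `λ₀(α) ≤ λ₁(α)` (the ordered roots of the characteristic
quadratic) are strictly decreasing in `α` on `[0, 3π/4)` and on `(3π/4, π)`. -/
theorem sep_eigenvalues_strictAnti (β0 : ℝ) (hβ0 : β0 ∈ Set.Ioo 0 Real.pi)
    (lam0 lam1 : ℝ → ℝ)
    (hchar : ∀ α ∈ Set.Ico 0 Real.pi, α ≠ 3 * Real.pi / 4 →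
      lam0 α ≤ lam1 α ∧ {l : ℝ | IsEigenvalueSep α β0 l} = {lam0 α, lam1 α}) :
    StrictAntiOn lam0 (Set.Ico 0 (3 * Real.pi / 4)) ∧
    StrictAntiOn lam0 (Set.Ioo (3 * Real.pi / 4) Real.pi) ∧
    StrictAntiOn lam1 (Set.Ico 0 (3 * Real.pi / 4)) ∧
    StrictAntiOn lam1 (Set.Ioo (3 * Real.pi / 4) Real.pi) := by
  have hσ : 0 < Real.sin β0 := Real.sin_pos_of_pos_of_lt_pi hβ0.1 hβ0.2
  have hπ := Real.pi_pos
  have S1 : ∀ x ∈ Set.Ico 0 (3 * Real.pi / 4), ∀ y ∈ Set.Ico 0 (3 * Real.pi / 4),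
      x < y → lam0 y < lam0 x ∧ lam1 y < lam1 x := by
    intro x hx y hy hxy
    exact step β0 hσ lam0 lam1 hchar x y ⟨hx.1, by linarith [hx.2]⟩
      ⟨hy.1, by linarith [hy.2]⟩ hxy (ne_of_lt hx.2) (ne_of_lt hy.2)
      (mul_pos (u_pos hx.1 hx.2) (u_pos hy.1 hy.2))
  have S2 : ∀ x ∈ Set.Ioo (3 * Real.pi / 4) Real.pi, ∀ y ∈ Set.Ioo (3 * Real.pi / 4) Real.pi,
      x < y → lam0 y < lam0 x ∧ lam1 y < lam1 x := by
    intro x hx y hy hxy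
    exact step β0 hσ lam0 lam1 hchar x y ⟨by linarith [hx.1], hx.2⟩
      ⟨by linarith [hy.1], hy.2⟩ hxy (ne_of_gt hx.1) (ne_of_gt hy.1)
      (mul_pos_of_neg_of_neg (u_neg hx.1 hx.2) (u_neg hy.1 hy.2))
  exact ⟨fun x hx y hy h => (S1 x hx y hy h).1, fun x hx y hy h => (S2 x hx y hy h).1,
    fun x hx y hy h => (S1 x hx y hy h).2, fun x hx y hy h => (S2 x hx y hy h).2⟩
end
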